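/- arXiv:2303.09469 — 5 statements merged into one kernel-verified Lean document; each statement's English description precedes it below -/
import Mathlib

section
/- Let 0 < L_l ≤ L_u < ∞ and let 𝒯_{l,u} = {T ∈ 𝒯 : T is differentiable with L_l ≤ T′(x) ≤ L_u for all x}. Then for any T, U ∈ 𝒯_{l,u} one has ‖T⁻¹ − U⁻¹‖₂ ≤ (L_u / L_l)·‖T − U‖₂. -/
/-!
Since `T' ≥ L_l`, the inverse `T⁻¹` is `L_l⁻¹`-Lipschitz, so at `x = U y`
`|T⁻¹ x - U⁻¹ x| = |T⁻¹ (U y) - T⁻¹ (T y)| ≤ L_l⁻¹ |U y - T y|`.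
Substituting `x = U y` costs a Jacobian `U' ≤ L_u`, whence
`L_l² ‖T⁻¹ - U⁻¹‖₂² ≤ L_u ‖T - U‖₂²`; finally `L_u ≥ 1` because `T` climbs from `0` to `1`
over an interval of length `1`, so `√L_u ≤ L_u`.
-/

open MeasureTheory

noncomputable section

/-- The class 𝒯 of continuous strictly increasing bijections of `[0,1]` fixing `0` and `1`. -/
def InT (T : ℝ → ℝ) : Prop :=
  ContinuousOn T (Set.Icc 0 1) ∧ StrictMonoOn T (Set.Icc 0 1) ∧
    Set.MapsTo T (Set.Icc 0 1) (Set.Icc 0 1) ∧ T 0 = 0 ∧ T 1 = 1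

/-- The L²([0,1]) distance between two maps. -/
def l2dist (f g : ℝ → ℝ) : ℝ := Real.sqrt (∫ x in (0:ℝ)..1, (f x - g x)^2)

open Set

section MeanValue

variable {D : Set ℝ} {f f' : ℝ → ℝ} {C : ℝ}

theorem Convex.mul_sub_le_image_sub_of_le_hasDerivWithinAt (hD : Convex ℝ D)
    (hf : ∀ x ∈ D, HasDerivWithinAt f (f' x) D x) (hC : ∀ x ∈ D, C ≤ f' x) :
    ∀ᵉ (x ∈ D) (y ∈ D), x ≤ y → C * (y - x) ≤ f y - f x := by
  have hint : ∀ x ∈ interior D, HasDerivWithinAt f (f' x) (interior D) x :=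
    fun x hx => (hf x (interior_subset hx)).mono interior_subset
  refine hD.mul_sub_le_image_sub_of_le_deriv (HasDerivWithinAt.continuousOn hf)
    (fun x hx => (hint x hx).differentiableWithinAt) fun x hx => ?_
  rw [deriv_eqOn isOpen_interior hint hx]
  exact hC x (interior_subset hx)

theorem Convex.image_sub_le_mul_sub_of_hasDerivWithinAt_le (hD : Convex ℝ D)
    (hf : ∀ x ∈ D, HasDerivWithinAt f (f' x) D x) (hC : ∀ x ∈ D, f' x ≤ C) :
    ∀ᵉ (x ∈ D) (y ∈ D), x ≤ y → f y - f x ≤ C * (y - x) := by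
  intro x hx y hy hxy
  have := hD.mul_sub_le_image_sub_of_le_hasDerivWithinAt (f := fun x => -f x)
    (fun x hx => (hf x hx).neg) (fun x hx => neg_le_neg (hC x hx)) x hx y hy hxy
  linarith

end MeanValue

theorem mul_abs_sub_le_of_leftInvOn {s t : Set ℝ} {f g : ℝ → ℝ} {C : ℝ}
    (hf : ∀ᵉ (x ∈ s) (y ∈ s), x ≤ y → C * (y - x) ≤ f y - f x)
    (hg : MapsTo g t s) (hfg : ∀ y ∈ t, f (g y) = y) ⦃y z : ℝ⦄ (hy : y ∈ t) (hz : z ∈ t) :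
    C * |g y - g z| ≤ |y - z| := by
  rcases le_total (g y) (g z) with h | h
  · have := hf _ (hg hy) _ (hg hz) h
    rw [hfg y hy, hfg z hz] at this
    rw [abs_sub_comm, abs_of_nonneg (sub_nonneg.2 h), abs_sub_comm]
    exact this.trans (le_abs_self _)
  · have := hf _ (hg hz) _ (hg hy) h
    rw [hfg y hy, hfg z hz] at this
    rw [abs_of_nonneg (sub_nonneg.2 h)]
    exact this.trans (le_abs_self _)

theorem setIntegral_image_le_mul_setIntegral {s : Set ℝ} (hs : MeasurableSet s)
    {U U' f g : ℝ → ℝ} {L : ℝ} (hU : ∀ x ∈ s, HasDerivWithinAt U (U' x) s x) (hUinj : InjOn U s)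
    (hU'L : ∀ x ∈ s, |U' x| ≤ L) (hf : IntegrableOn f (U '' s)) (hg : IntegrableOn g s)
    (hfg : ∀ x ∈ s, 0 ≤ f (U x) ∧ f (U x) ≤ g x) :
    ∫ y in U '' s, f y ≤ L * ∫ x in s, g x := by
  rw [integral_image_eq_integral_abs_deriv_smul hs hU hUinj, ← integral_const_mul]
  refine setIntegral_mono_on
    ((integrableOn_image_iff_integrableOn_abs_deriv_smul hs hU hUinj f).mp hf)
    (hg.const_mul L) hs fun x hx => ?_
  obtain ⟨hf₀, hfg⟩ := hfg x hx
  calc |U' x| • f (U x) ≤ |U' x| * g x := mul_le_mul_of_nonneg_left hfg (abs_nonneg _)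
    _ ≤ L * g x := mul_le_mul_of_nonneg_right (hU'L x hx) (hf₀.trans hfg)

theorem InT.image_Icc {T : ℝ → ℝ} (hT : InT T) : T '' Icc 0 1 = Icc 0 1 := by
  obtain ⟨hcont, -, hmaps, h0, h1⟩ := hT
  refine (mapsTo_iff_image_subset.mp hmaps).antisymm ?_
  simpa only [h0, h1] using intermediate_value_Icc zero_le_one hcont

theorem l2dist_eq_sqrt_setIntegral (f g : ℝ → ℝ) :
    l2dist f g = √(∫ x in Icc 0 1, (f x - g x) ^ 2) := by
  rw [l2dist, intervalIntegral.integral_of_le zero_le_one, integral_Icc_eq_integral_Ioc]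

theorem sqrt_le_div_mul_sqrt_of_sq_mul_le {a b A C : ℝ} (ha : 0 < a) (hb : 1 ≤ b)
    (h : a ^ 2 * A ≤ b * C) : √A ≤ b / a * √C := by
  rw [div_mul_eq_mul_div, le_div_iff₀ ha]
  calc √A * a = √(a ^ 2 * A) := by rw [Real.sqrt_mul (sq_nonneg a), Real.sqrt_sq ha.le, mul_comm]
    _ ≤ √(b * C) := Real.sqrt_le_sqrt h
    _ = √b * √C := Real.sqrt_mul (by linarith) C
    _ ≤ b * √C := by gcongr; exact Real.sqrt_le_self_iff.2 (Or.inr hb)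

theorem l2_inverse_lipschitz_bound_general (Ll Lu : ℝ) (hLl : 0 < Ll)
    (T U Ti Ui T' U' : ℝ → ℝ) (hT : InT T) (hU : InT U) (hTi : InT Ti) (hUi : InT Ui)
    (hT' : ∀ x ∈ Set.Icc (0:ℝ) 1,
      HasDerivWithinAt T (T' x) (Set.Icc (0:ℝ) 1) x ∧ Ll ≤ T' x ∧ T' x ≤ Lu)
    (hU' : ∀ x ∈ Set.Icc (0:ℝ) 1,
      HasDerivWithinAt U (U' x) (Set.Icc (0:ℝ) 1) x ∧ Ll ≤ U' x ∧ U' x ≤ Lu)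
    (hTinv : (∀ x ∈ Set.Icc (0:ℝ) 1, Ti (T x) = x) ∧ ∀ x ∈ Set.Icc (0:ℝ) 1, T (Ti x) = x)
    (hUinv : (∀ x ∈ Set.Icc (0:ℝ) 1, Ui (U x) = x) ∧ ∀ x ∈ Set.Icc (0:ℝ) 1, U (Ui x) = x) :
    l2dist Ti Ui ≤ (Lu / Ll) * l2dist T U := by
  obtain ⟨hTc, -, hTmaps, hT0, hT1⟩ := hT
  obtain ⟨hTic, -, hTimaps, -, -⟩ := hTi
  have hI : Convex ℝ (Icc (0:ℝ) 1) := convex_Icc 0 1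
  have hLu : 1 ≤ Lu := by
    simpa [hT0, hT1] using hI.image_sub_le_mul_sub_of_hasDerivWithinAt_le
      (fun x hx => (hT' x hx).1) (fun x hx => (hT' x hx).2.2) 0 (left_mem_Icc.2 zero_le_one)
      1 (right_mem_Icc.2 zero_le_one) zero_le_one
  have hTi_lip := mul_abs_sub_le_of_leftInvOn (hI.mul_sub_le_image_sub_of_le_hasDerivWithinAt
    (fun x hx => (hT' x hx).1) (fun x hx => (hT' x hx).2.1)) hTimaps hTinv.2
  have hpt : ∀ y ∈ Icc (0:ℝ) 1, 0 ≤ Ll ^ 2 * (Ti (U y) - Ui (U y)) ^ 2 ∧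
      Ll ^ 2 * (Ti (U y) - Ui (U y)) ^ 2 ≤ (T y - U y) ^ 2 := by
    intro y hy
    refine ⟨by positivity, ?_⟩
    have h := hTi_lip (hU.2.2.1 hy) (hTmaps hy)
    rw [hTinv.1 y hy, abs_sub_comm (U y)] at h
    rw [hUinv.1 y hy]
    simpa only [mul_pow, sq_abs] using pow_le_pow_left₀ (by positivity) h 2
  have hchange := setIntegral_image_le_mul_setIntegral measurableSet_Icc
    (fun x hx => (hU' x hx).1) hU.2.1.injOn
    (fun x hx => (abs_of_pos (hLl.trans_le (hU' x hx).2.1)).trans_le (hU' x hx).2.2)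
    (hU.image_Icc ▸ (((hTic.sub hUi.1).pow 2).integrableOn_Icc.const_mul _))
    ((hTc.sub hU.1).pow 2).integrableOn_Icc hpt
  rw [hU.image_Icc, integral_const_mul] at hchange
  rw [l2dist_eq_sqrt_setIntegral, l2dist_eq_sqrt_setIntegral]
  exact sqrt_le_div_mul_sqrt_of_sq_mul_le hLl hLu hchange

/-- for `T, U ∈ 𝒯_{l,u}` (differentiable with `L_l ≤ T′ ≤ L_u` on `[0,1]`),
with inverse bijections `Ti, Ui`: `‖T⁻¹ − U⁻¹‖₂ ≤ (L_u/L_l) ‖T − U‖₂`. -/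
theorem l2_inverse_lipschitz_bound (Ll Lu : ℝ) (hLl : 0 < Ll) (hLu : Ll ≤ Lu)
    (T U Ti Ui T' U' : ℝ → ℝ) (hT : InT T) (hU : InT U) (hTi : InT Ti) (hUi : InT Ui)
    (hT' : ∀ x ∈ Set.Icc (0:ℝ) 1,
      HasDerivWithinAt T (T' x) (Set.Icc (0:ℝ) 1) x ∧ Ll ≤ T' x ∧ T' x ≤ Lu)
    (hU' : ∀ x ∈ Set.Icc (0:ℝ) 1,
      HasDerivWithinAt U (U' x) (Set.Icc (0:ℝ) 1) x ∧ Ll ≤ U' x ∧ U' x ≤ Lu)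
    (hTinv : (∀ x ∈ Set.Icc (0:ℝ) 1, Ti (T x) = x) ∧ ∀ x ∈ Set.Icc (0:ℝ) 1, T (Ti x) = x)
    (hUinv : (∀ x ∈ Set.Icc (0:ℝ) 1, Ui (U x) = x) ∧ ∀ x ∈ Set.Icc (0:ℝ) 1, U (Ui x) = x) :
    l2dist Ti Ui ≤ (Lu / Ll) * l2dist T U :=
  l2_inverse_lipschitz_bound_general Ll Lu hLl T U Ti Ui T' U' hT hU hTi hUi hT' hU' hTinv hUinv
end
end

section
/- Let (T_i)_{i∈ℤ} be a stationary sequence of random elements of 𝒯 satisfying T_i = T_{ε_i} ∘ S ∘ [𝛂 T_{i−1}] for all i, where S ∈ 𝒯, 𝛂 ∈ (−1,1), and (T_{ε_i})_{i∈ℤ} are i.i.d. random elements of 𝒯, each independent of (T_j)_{j<i}, with E[T_{ε_i}(y)] = y for all y ∈ [0,1]. For α ∈ [−1,1] define S_α(x) = E[(T_i ∘ [α T_{i−1}]⁻¹)(x)] and M(α) = E‖S_α ∘ [α T_{i−1}] − T_i‖₂². Then the true parameter 𝛂 minimizes M: M(𝛂) ≤ M(α) for every α ∈ [−1,1]. 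-/
open MeasureTheory ProbabilityTheory

noncomputable section

/-- The inverse bijection of `T ∈ 𝒯` (on `[0,1]`). -/
def tinv (T : ℝ → ℝ) : ℝ → ℝ := Function.invFunOn T (Set.Icc 0 1)

/-- The α-contraction `[αT]`. -/
def contr (α : ℝ) (T : ℝ → ℝ) (x : ℝ) : ℝ :=
  if 0 ≤ α then x + α * (T x - x) else x + α * (x - tinv T x)

/-- The population map `S_α(x) = E[(T_i ∘ [α T_{i−1}]⁻¹)(x)]` (computed at `i = 1`). -/
def Salpha {Ω : Type*} [MeasurableSpace Ω] (P : Measure Ω)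
    (T : ℤ → Ω → ℝ → ℝ) (α x : ℝ) : ℝ :=
  ∫ ω, T 1 ω (tinv (contr α (T 0 ω)) x) ∂P

/-- The population objective `M(α) = E‖S_α ∘ [α T_{i−1}] − T_i‖₂²` (computed at `i = 1`). -/
def Mobj {Ω : Type*} [MeasurableSpace Ω] (P : Measure Ω)
    (T : ℤ → Ω → ℝ → ℝ) (α : ℝ) : ℝ :=
  ∫ ω, (∫ x in (0:ℝ)..1, (Salpha P T α (contr α (T 0 ω) x) - T 1 ω x)^2) ∂P

open Set Filter

/-!
Write `V = S ∘ [𝛂 T₀]`, so that `T₁ = T_{ε₁} ∘ V` on `[0,1]`; since `E T_{ε₁} = id`, also `S_𝛂 = S`,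
so `M(𝛂) = E‖V − T₁‖₂²`. For any `α`, the difference `U = S_α ∘ [α T₀] − V` is, like `V`, a function
of the past of the chain and hence independent of `T_{ε₁}`. Integrating `T_{ε₁}` out first gives
`E[U(x) (V(x) − T_{ε₁}(V(x)))] = 0` for every `x`, and by Pythagoras `M(α) = M(𝛂) + E‖U‖₂²`.
-/

lemma StrictMonoOn.continuousOn_of_image_eq {f : ℝ → ℝ} {s t : Set ℝ} [s.OrdConnected]
    [t.OrdConnected] (hf : StrictMonoOn f s) (hfs : f '' s = t) : ContinuousOn f s := by
  subst hfs
  rw [continuousOn_iff_continuous_domRestrict]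
  exact continuous_subtype_val.comp (hf.orderIso f s).continuous

namespace InT

variable {T R : ℝ → ℝ} {x y : ℝ}

lemma surjOn (h : InT T) : SurjOn T (Icc 0 1) (Icc 0 1) := by
  have := intermediate_value_Icc zero_le_one h.1
  rwa [h.2.2.2.1, h.2.2.2.2] at this

lemma norm_apply_le_one (h : InT T) (hx : x ∈ Icc (0:ℝ) 1) : ‖T x‖ ≤ 1 := by
  rw [Real.norm_of_nonneg (h.2.2.1 hx).1]
  exact (h.2.2.1 hx).2

lemma tinv_mem (h : InT T) (hx : x ∈ Icc (0:ℝ) 1) : tinv T x ∈ Icc (0:ℝ) 1 :=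
  Function.invFunOn_mem (h.surjOn hx)

lemma apply_tinv (h : InT T) (hx : x ∈ Icc (0:ℝ) 1) : T (tinv T x) = x :=
  Function.invFunOn_eq (h.surjOn hx)

lemma tinv_apply (h : InT T) (hx : x ∈ Icc (0:ℝ) 1) : tinv T (T x) = x :=
  h.2.1.injOn.leftInvOn_invFunOn hx

lemma tinv_le_iff (h : InT T) (hx : x ∈ Icc (0:ℝ) 1) (hy : y ∈ Icc (0:ℝ) 1) :
    tinv T x ≤ y ↔ x ≤ T y := by
  conv_rhs => rw [← h.apply_tinv hx]
  exact (h.2.1.le_iff_le (h.tinv_mem hx) hy).symm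

protected lemma tinv (h : InT T) : InT (tinv T) := by
  have hmono : StrictMonoOn (tinv T) (Icc 0 1) := fun x hx y hy hxy => by
    rwa [← h.2.1.lt_iff_lt (h.tinv_mem hx) (h.tinv_mem hy), h.apply_tinv hx, h.apply_tinv hy]
  have himage : tinv T '' Icc 0 1 = Icc 0 1 :=
    (MapsTo.image_subset fun _ hx => h.tinv_mem hx).antisymm
      fun y hy => ⟨T y, h.2.2.1 hy, h.tinv_apply hy⟩
  have h0 : tinv T 0 = 0 := by simpa [h.2.2.2.1] using h.tinv_apply (x := 0) (by simp)
  have h1 : tinv T 1 = 1 := by simpa [h.2.2.2.2] using h.tinv_apply (x := 1) (by simp)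
  exact ⟨hmono.continuousOn_of_image_eq himage, hmono, fun _ hx => h.tinv_mem hx, h0, h1⟩

protected lemma comp (hT : InT T) (hR : InT R) : InT (T ∘ R) :=
  ⟨hT.1.comp hR.1 hR.2.2.1, hT.2.1.comp hR.2.1 hR.2.2.1, hT.2.2.1.comp hR.2.2.1,
    by simp [hR.2.2.2.1, hT.2.2.2.1], by simp [hR.2.2.2.2, hT.2.2.2.2]⟩

lemma add_mul_sub (h : InT T) {t : ℝ} (ht : t ∈ Icc (0:ℝ) 1) :
    InT fun x => x + t * (T x - x) := by
  refine ⟨continuousOn_id.add (continuousOn_const.mul (h.1.sub continuousOn_id)),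
    fun x hx y hy hxy => ?_, fun x hx => ?_, by simp [h.2.2.2.1], by simp [h.2.2.2.2]⟩
  · have hT := h.2.1 hx hy hxy
    rcases ht.2.eq_or_lt with rfl | ht1
    · linarith
    · nlinarith [ht.1]
  · have hTx := h.2.2.1 hx
    constructor <;> nlinarith [hx.1, hx.2, hTx.1, hTx.2, ht.1, ht.2]

protected lemma contr (h : InT T) {α : ℝ} (hα : α ∈ Icc (-1:ℝ) 1) : InT (contr α T) := by
  by_cases hα0 : 0 ≤ α
  · convert h.add_mul_sub ⟨hα0, hα.2⟩ using 1
    ext x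
    simp [contr, hα0]
  · convert h.tinv.add_mul_sub (t := -α) ⟨by linarith, by linarith [hα.1]⟩ using 1
    ext x
    simp only [contr, hα0, if_false]
    ring

end InT

/-- Evaluation `(F, v) ↦ F v` is not measurable for the product σ-algebra on `ℝ → ℝ`; for `F`
monotone and continuous on `[0,1]` and `v ∈ [0,1]` it agrees with this countable supremum,
which is. -/
def evalSup (F : ℝ → ℝ) (v : ℝ) : ℝ :=
  ⨆ q : ℚ, if (q : ℝ) ∈ Icc (0:ℝ) 1 ∧ (q : ℝ) ≤ v then F q else F 0

lemma mem_closure_Icc_inter_range_ratCast {v : ℝ} (hv : 0 ≤ v) :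
    v ∈ closure (Icc 0 v ∩ range ((↑) : ℚ → ℝ)) := by
  rcases hv.eq_or_lt with rfl | hpos
  · exact subset_closure ⟨left_mem_Icc.2 le_rfl, 0, Rat.cast_zero⟩
  · have hIoo : closure (Ioo 0 v) ⊆ closure (Icc 0 v ∩ range ((↑) : ℚ → ℝ)) :=
      closure_minimal ((Rat.denseRange_cast.open_subset_closure_inter isOpen_Ioo).trans
        (closure_mono (inter_subset_inter_left _ Ioo_subset_Icc_self))) isClosed_closure
    exact hIoo (by rw [closure_Ioo hpos.ne]; exact right_mem_Icc.2 hpos.le)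

lemma evalSup_eq {F : ℝ → ℝ} (hm : MonotoneOn F (Icc 0 1)) (hc : ContinuousOn F (Icc 0 1))
    {v : ℝ} (hv : v ∈ Icc (0:ℝ) 1) : evalSup F v = F v := by
  have h0 : (0:ℝ) ∈ Icc (0:ℝ) 1 := left_mem_Icc.2 zero_le_one
  have hle : ∀ q : ℚ, (if (q : ℝ) ∈ Icc (0:ℝ) 1 ∧ (q : ℝ) ≤ v then F q else F 0) ≤ F v := by
    intro q
    split_ifs with hq
    · exact hm hq.1 hv hq.2
    · exact hm h0 hv hv.1
  refine le_antisymm (ciSup_le hle) ?_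
  have hcont : ContinuousWithinAt F (Icc 0 v ∩ range ((↑) : ℚ → ℝ)) v :=
    (hc.continuousWithinAt hv).mono (inter_subset_left.trans (Icc_subset_Icc_right hv.2))
  refine closure_minimal ?_ isClosed_Iic (hcont.mem_closure_image
    (mem_closure_Icc_inter_range_ratCast hv.1))
  rintro _ ⟨_, ⟨hx, q, rfl⟩, rfl⟩
  have hq : (q : ℝ) ∈ Icc (0:ℝ) 1 ∧ (q : ℝ) ≤ v := ⟨⟨hx.1, hx.2.trans hv.2⟩, hx.2⟩
  exact (if_pos hq).symm.le.trans (le_ciSup ⟨F v, forall_mem_range.2 hle⟩ q)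

lemma measurable_evalSup {Ω : Type*} {mΩ : MeasurableSpace Ω} {F : Ω → ℝ → ℝ}
    (hF : ∀ y ∈ Icc (0:ℝ) 1, Measurable fun ω => F ω y) {v : Ω → ℝ} (hv : Measurable v) :
    Measurable fun ω => evalSup (F ω) (v ω) := by
  have h0 := hF 0 (left_mem_Icc.2 zero_le_one)
  refine Measurable.iSup fun q => ?_
  by_cases hq : (q : ℝ) ∈ Icc (0:ℝ) 1
  · simp only [hq, true_and]
    exact Measurable.ite (measurableSet_le measurable_const hv) (hF _ hq) h0
  · simpa only [hq, false_and, if_false] using h0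

def IsRandomT {Ω : Type*} (m : MeasurableSpace Ω) (F : Ω → ℝ → ℝ) : Prop :=
  (∀ ω, InT (F ω)) ∧ ∀ x ∈ Icc (0:ℝ) 1, Measurable[m] fun ω => F ω x

namespace IsRandomT

variable {Ω : Type*} {m : MeasurableSpace Ω} {F G : Ω → ℝ → ℝ}

lemma of_measurable (hF : ∀ ω, InT (F ω)) (hm : Measurable F) : IsRandomT m F :=
  ⟨hF, fun x _ => (measurable_pi_apply x).comp hm⟩

lemma const {S : ℝ → ℝ} (hS : InT S) : IsRandomT m fun _ => S :=
  ⟨fun _ => hS, fun _ _ => measurable_const⟩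

lemma mono {m' : MeasurableSpace Ω} (h : IsRandomT m F) (hm : m ≤ m') : IsRandomT m' F :=
  ⟨h.1, fun x hx => (h.2 x hx).mono hm le_rfl⟩

lemma measurable_apply (h : IsRandomT m F) {v : Ω → ℝ} (hv : Measurable v)
    (hv1 : ∀ ω, v ω ∈ Icc (0:ℝ) 1) : Measurable fun ω => F ω (v ω) := by
  have heq : (fun ω => evalSup (F ω) (v ω)) = fun ω => F ω (v ω) :=
    funext fun ω => evalSup_eq (h.1 ω).2.1.monotoneOn (h.1 ω).1 (hv1 ω)
  exact heq ▸ measurable_evalSup h.2 hv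

protected lemma comp (hF : IsRandomT m F) (hG : IsRandomT m G) :
    IsRandomT m fun ω => F ω ∘ G ω :=
  ⟨fun ω => (hF.1 ω).comp (hG.1 ω),
    fun x hx => hF.measurable_apply (hG.2 x hx) fun ω => (hG.1 ω).2.2.1 hx⟩

protected lemma tinv (h : IsRandomT m F) : IsRandomT m fun ω => tinv (F ω) := by
  refine ⟨fun ω => (h.1 ω).tinv, fun x hx => measurable_of_Iic fun c => ?_⟩
  rcases lt_or_ge c 0 with hc | hc
  · convert MeasurableSet.empty
    ext ω
    simpa using hc.trans_le ((h.1 ω).tinv_mem hx).1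
  · have hc' : min c 1 ∈ Icc (0:ℝ) 1 := ⟨le_min hc zero_le_one, min_le_right _ _⟩
    have hiff : ∀ ω, tinv (F ω) x ≤ c ↔ x ≤ F ω (min c 1) := fun ω => by
      rw [← (h.1 ω).tinv_le_iff hx hc', le_min_iff, and_iff_left ((h.1 ω).tinv_mem hx).2]
    simp only [preimage, mem_Iic, hiff]
    exact measurableSet_le measurable_const (h.2 _ hc')

protected lemma contr (h : IsRandomT m F) {α : ℝ} (hα : α ∈ Icc (-1:ℝ) 1) :
    IsRandomT m fun ω => contr α (F ω) := by
  refine ⟨fun ω => (h.1 ω).contr hα, fun x hx => ?_⟩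
  have hF := h.2 x hx
  have hFinv := h.tinv.2 x hx
  unfold contr
  split_ifs <;> fun_prop

section Integral

variable {P : Measure Ω} [IsProbabilityMeasure P]

lemma integrable_apply (h : IsRandomT m F) {x : ℝ} (hx : x ∈ Icc (0:ℝ) 1) :
    Integrable (fun ω => F ω x) P :=
  .of_bound (h.2 x hx).aestronglyMeasurable 1 (.of_forall fun ω => (h.1 ω).norm_apply_le_one hx)

lemma inT_integral (h : IsRandomT m F) : InT fun x => ∫ ω, F ω x ∂P := by
  refine ⟨continuousOn_of_dominated (bound := fun _ => 1)
      (fun x hx => (h.integrable_apply hx).1)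
      (fun x hx => .of_forall fun ω => (h.1 ω).norm_apply_le_one hx)
      (integrable_const 1) (.of_forall fun ω => (h.1 ω).1),
    fun x hx y hy hxy => ?_, fun x hx => ⟨?_, ?_⟩, by simp [(h.1 _).2.2.2.1],
    by simp [(h.1 _).2.2.2.2]⟩
  · have hpos : 0 < ∫ ω, (F ω y - F ω x) ∂P := by
      refine (integral_pos_iff_support_of_nonneg
        (fun ω => sub_nonneg.2 ((h.1 ω).2.1 hx hy hxy).le)
        ((h.integrable_apply hy).sub (h.integrable_apply hx))).2 ?_
      rw [Function.support_eq_univ fun ω => sub_ne_zero.2 ((h.1 ω).2.1 hx hy hxy).ne']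
      simp
    rw [integral_sub (h.integrable_apply hy) (h.integrable_apply hx)] at hpos
    linarith
  · exact integral_nonneg fun ω => ((h.1 ω).2.2.1 hx).1
  · calc ∫ ω, F ω x ∂P ≤ ∫ _, (1:ℝ) ∂P :=
          integral_mono (h.integrable_apply hx) (integrable_const 1)
            fun ω => ((h.1 ω).2.2.1 hx).2
      _ = 1 := by simp

end Integral

end IsRandomT

lemma integral_sq_sub_le_of_integral_mul_eq_zero {α : Type*} {mα : MeasurableSpace α}
    {μ : Measure α} {f g h : α → ℝ} (hf : MemLp f 2 μ) (hg : MemLp g 2 μ) (hh : MemLp h 2 μ)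
    (horth : ∫ x, (f x - g x) * (g x - h x) ∂μ = 0) :
    ∫ x, (g x - h x) ^ 2 ∂μ ≤ ∫ x, (f x - h x) ^ 2 ∂μ := by
  have ha := hf.sub hg
  have hb := hg.sub hh
  have i1 : Integrable (fun x => (f x - g x) ^ 2) μ := ha.integrable_sq
  have i2 : Integrable (fun x => (f x - g x) * (g x - h x)) μ := ha.integrable_mul hb
  have i3 : Integrable (fun x => (g x - h x) ^ 2) μ := hb.integrable_sq
  have hsplit : ∀ x, (f x - h x) ^ 2
      = (f x - g x) ^ 2 + (2 * ((f x - g x) * (g x - h x)) + (g x - h x) ^ 2) := fun x => by ring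
  simp_rw [hsplit]
  have i4 : Integrable (fun x => 2 * ((f x - g x) * (g x - h x)) + (g x - h x) ^ 2) μ :=
    (i2.const_mul 2).add i3
  rw [integral_add i1 i4, integral_add (i2.const_mul 2) i3,
    integral_const_mul, horth]
  have : 0 ≤ ∫ x, (f x - g x) ^ 2 ∂μ := integral_nonneg fun x => sq_nonneg (f x - g x)
  linarith

section Product

variable {Ω : Type*} {mΩ : MeasurableSpace Ω} {P : Measure Ω} [IsProbabilityMeasure P]

lemma IsRandomT.memLp_uncurry {F : Ω → ℝ → ℝ} (h : IsRandomT mΩ F) (p : ENNReal) :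
    MemLp (fun z : Ω × ℝ => F z.1 z.2) p (P.prod (volume.restrict (Ioc 0 1))) := by
  have hae : ∀ᵐ z ∂(P.prod (volume.restrict (Ioc (0:ℝ) 1))), z.2 ∈ Icc (0:ℝ) 1 := by
    rw [Measure.ae_prod_iff_ae_ae (measurable_snd measurableSet_Icc)]
    exact .of_forall fun _ => (ae_restrict_mem measurableSet_Ioc).mono
      fun _ hx => Ioc_subset_Icc_self hx
  refine .of_bound ?_ 1 (hae.mono fun z hz => (h.1 z.1).norm_apply_le_one hz)
  refine (measurable_evalSup (F := fun z : Ω × ℝ => F z.1)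
    (fun y hy => (h.2 y hy).comp measurable_fst) measurable_snd).aestronglyMeasurable.congr ?_
  exact hae.mono fun z hz => evalSup_eq (h.1 z.1).2.1.monotoneOn (h.1 z.1).1 hz

lemma integral_intervalIntegral_sq_sub_le {f g h : Ω → ℝ → ℝ} (hf : IsRandomT mΩ f)
    (hg : IsRandomT mΩ g) (hh : IsRandomT mΩ h)
    (horth : ∀ x ∈ Icc (0:ℝ) 1, ∫ ω, (f ω x - g ω x) * (g ω x - h ω x) ∂P = 0) :
    ∫ ω, (∫ x in (0:ℝ)..1, (g ω x - h ω x) ^ 2) ∂P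
      ≤ ∫ ω, (∫ x in (0:ℝ)..1, (f ω x - h ω x) ^ 2) ∂P := by
  set μ := P.prod (volume.restrict (Ioc (0:ℝ) 1))
  have hprod : ∀ {F : Ω × ℝ → ℝ}, Integrable F μ →
      ∫ ω, (∫ x in (0:ℝ)..1, F (ω, x)) ∂P = ∫ z, F z ∂μ := fun hF => by
    simp_rw [intervalIntegral.integral_of_le zero_le_one]
    exact (integral_prod _ hF).symm
  have hf2 := hf.memLp_uncurry (P := P) 2
  have hg2 := hg.memLp_uncurry (P := P) 2
  have hh2 := hh.memLp_uncurry (P := P) 2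
  calc ∫ ω, (∫ x in (0:ℝ)..1, (g ω x - h ω x) ^ 2) ∂P
      = ∫ z, (g z.1 z.2 - h z.1 z.2) ^ 2 ∂μ := hprod (hg2.sub hh2).integrable_sq
    _ ≤ ∫ z, (f z.1 z.2 - h z.1 z.2) ^ 2 ∂μ :=
      integral_sq_sub_le_of_integral_mul_eq_zero hf2 hg2 hh2 ?_
    _ = ∫ ω, (∫ x in (0:ℝ)..1, (f ω x - h ω x) ^ 2) ∂P := (hprod (hf2.sub hh2).integrable_sq).symm
  have hint : Integrable (fun z => (f z.1 z.2 - g z.1 z.2) * (g z.1 z.2 - h z.1 z.2)) μ :=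
    (hf2.sub hg2).integrable_mul (hg2.sub hh2)
  rw [integral_prod_symm _ hint]
  exact integral_eq_zero_of_ae ((ae_restrict_mem measurableSet_Ioc).mono
    fun x hx => horth x (Ioc_subset_Icc_self hx))

end Product

section Noise

variable {Ω : Type*} {mΩ : MeasurableSpace Ω} {P : Measure Ω}

/-- By independence the law of `((u, v), E)` is a product; integrating out `E` first turns
`E (v)` into `v`. -/
theorem integral_mul_sub_apply_eq_zero [IsProbabilityMeasure P] {E : Ω → ℝ → ℝ}
    (hE : ∀ ω, InT (E ω)) (hEm : Measurable E) (hmean : ∀ y ∈ Icc (0:ℝ) 1, ∫ ω, E ω y ∂P = y)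
    {u v : Ω → ℝ} (hu : Measurable u) (hv : Measurable v) (hv1 : ∀ ω, v ω ∈ Icc (0:ℝ) 1)
    (hind : IndepFun (fun ω => (u ω, v ω)) E P) :
    ∫ ω, u ω * (v ω - E ω (v ω)) ∂P = 0 := by
  set X : Ω → ℝ × ℝ := fun ω => (u ω, v ω)
  set φ : (ℝ × ℝ) × (ℝ → ℝ) → ℝ := fun z => z.1.1 * (z.1.2 - evalSup z.2 z.1.2)
  have hφ : Measurable φ := measurable_fst.fst.mul (measurable_fst.snd.sub
    (measurable_evalSup (fun y _ => (measurable_pi_apply y).comp measurable_snd)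
      measurable_fst.snd))
  have hX : Measurable X := hu.prodMk hv
  have hER : IsRandomT mΩ E := .of_measurable hE hEm
  have hinner : ∀ᵐ x ∂(P.map X), ∫ e, φ (x, e) ∂(P.map E) = 0 := by
    filter_upwards [(ae_map_iff hX.aemeasurable (measurable_snd measurableSet_Icc)).2
      (.of_forall hv1)] with x hx
    rw [integral_map (f := fun e => φ (x, e)) hEm.aemeasurable
      (hφ.comp measurable_prodMk_left).aestronglyMeasurable]
    simp only [φ, evalSup_eq (hE _).2.1.monotoneOn (hE _).1 hx]
    rw [integral_const_mul, integral_sub (integrable_const _) (hER.integrable_apply hx),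
      hmean _ hx]
    simp
  calc ∫ ω, u ω * (v ω - E ω (v ω)) ∂P = ∫ ω, φ (X ω, E ω) ∂P := by
        simp only [φ, X, evalSup_eq (hE _).2.1.monotoneOn (hE _).1 (hv1 _)]
    _ = ∫ z, φ z ∂(P.map fun ω => (X ω, E ω)) :=
        (integral_map (hX.prodMk hEm).aemeasurable hφ.aestronglyMeasurable).symm
    _ = ∫ z, φ z ∂((P.map X).prod (P.map E)) := by
        rw [(indepFun_iff_map_prod_eq_prod_map_map hX.aemeasurable hEm.aemeasurable).1 hind]
    _ = 0 := by
        by_cases hφi : Integrable φ ((P.map X).prod (P.map E))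
        · rw [integral_prod φ hφi]
          exact integral_eq_zero_of_ae hinner
        · exact integral_undef hφi

end Noise

section Model

variable {Ω : Type*} {𝒢 mΩ : MeasurableSpace Ω} {P : Measure Ω} {T : ℤ → Ω → ℝ → ℝ}

lemma inT_salpha [IsProbabilityMeasure P] (hT : ∀ i ω, InT (T i ω))
    (hTmeas : ∀ i, Measurable (T i)) {α : ℝ} (hα : α ∈ Icc (-1:ℝ) 1) :
    InT (Salpha P T α) :=
  ((IsRandomT.of_measurable (hT 1) (hTmeas 1)).comp
    ((IsRandomT.of_measurable (hT 0) (hTmeas 0)).contr hα).tinv).inT_integral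

lemma salpha_eq_of_model {S : ℝ → ℝ} (hS : InT S) {a0 : ℝ} (ha0 : a0 ∈ Icc (-1:ℝ) 1)
    (hT0 : ∀ ω, InT (T 0 ω)) {E : Ω → ℝ → ℝ}
    (hmodel : ∀ ω, ∀ x ∈ Icc (0:ℝ) 1, T 1 ω x = E ω (S (contr a0 (T 0 ω) x)))
    (hmean : ∀ y ∈ Icc (0:ℝ) 1, ∫ ω, E ω y ∂P = y) {y : ℝ} (hy : y ∈ Icc (0:ℝ) 1) :
    Salpha P T a0 y = S y := by
  have hC := fun ω => (hT0 ω).contr ha0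
  calc Salpha P T a0 y = ∫ ω, E ω (S y) ∂P := integral_congr_ae (.of_forall fun ω => by
        dsimp only
        rw [hmodel ω _ ((hC ω).tinv_mem hy), (hC ω).apply_tinv hy])
    _ = S y := hmean _ (hS.2.2.1 hy)

theorem mobj_le_mobj_of_indep [IsProbabilityMeasure P] {S : ℝ → ℝ} (hS : InT S) {a0 α : ℝ}
    (ha0 : a0 ∈ Icc (-1:ℝ) 1) (hα : α ∈ Icc (-1:ℝ) 1) (hT : ∀ i ω, InT (T i ω))
    (hTmeas : ∀ i, Measurable (T i)) {E : Ω → ℝ → ℝ} (hE : ∀ ω, InT (E ω)) (hEm : Measurable E)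
    (hmodel : ∀ ω, ∀ x ∈ Icc (0:ℝ) 1, T 1 ω x = E ω (S (contr a0 (T 0 ω) x)))
    (hmean : ∀ y ∈ Icc (0:ℝ) 1, ∫ ω, E ω y ∂P = y) (h𝒢 : 𝒢 ≤ mΩ)
    (hT0 : ∀ x ∈ Icc (0:ℝ) 1, Measurable[𝒢] fun ω => T 0 ω x)
    (hind : Indep 𝒢 (MeasurableSpace.comap E MeasurableSpace.pi) P) :
    Mobj P T a0 ≤ Mobj P T α := by
  have hT0𝒢 : IsRandomT 𝒢 (T 0) := ⟨hT 0, hT0⟩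
  have hfit := (IsRandomT.const (m := 𝒢) (inT_salpha (P := P) hT hTmeas hα)).comp (hT0𝒢.contr hα)
  have htrue := (IsRandomT.const (m := 𝒢) hS).comp (hT0𝒢.contr ha0)
  calc Mobj P T a0
      = ∫ ω, (∫ x in (0:ℝ)..1, ((S ∘ contr a0 (T 0 ω)) x - T 1 ω x) ^ 2) ∂P := by
        refine integral_congr_ae (.of_forall fun ω =>
          intervalIntegral.integral_congr fun x hx => ?_)
        rw [uIcc_of_le zero_le_one] at hx
        simp only [Function.comp_apply, salpha_eq_of_model hS ha0 (hT 0) hmodel hmean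
          ((hT0𝒢.contr ha0).1 ω |>.2.2.1 hx)]
    _ ≤ Mobj P T α := integral_intervalIntegral_sq_sub_le (hfit.mono h𝒢) (htrue.mono h𝒢)
        (.of_measurable (hT 1) (hTmeas 1)) fun x hx => ?_
  have hpair := ((hfit.2 x hx).sub (htrue.2 x hx)).prodMk (htrue.2 x hx)
  refine (integral_congr_ae (.of_forall fun ω => by rw [hmodel ω x hx]; rfl)).trans
    (integral_mul_sub_apply_eq_zero hE hEm hmean (hpair.fst.mono h𝒢 le_rfl)
      ((htrue.2 x hx).mono h𝒢 le_rfl) (fun ω => (htrue.1 ω).2.2.1 hx)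
      ((IndepFun_iff_Indep _ _ _).2 (indep_of_indep_of_le_left hind hpair.comap_le)))

end Model

theorem true_alpha_minimizes_general {Ω : Type*} [MeasurableSpace Ω]
    (P : Measure Ω) [IsProbabilityMeasure P]
    (S : ℝ → ℝ) (hS : InT S) (a0 : ℝ) (ha0 : a0 ∈ Set.Ioo (-1 : ℝ) 1)
    (T Tε : ℤ → Ω → ℝ → ℝ)
    (hT : ∀ i ω, InT (T i ω)) (hTε : ∀ i ω, InT (Tε i ω))
    (hTmeas : ∀ i, Measurable (T i)) (hTεmeas : ∀ i, Measurable (Tε i))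
    -- the autoregressive model equation
    (hmodel : ∀ i ω, ∀ x ∈ Set.Icc (0:ℝ) 1, T i ω x = Tε i ω (S (contr a0 (T (i-1) ω) x)))
    -- ... each independent of the past of the chain ...
    (hindep_past : ∀ i : ℤ, IndepFun (fun ω => fun j : {j : ℤ // j < i} => T j.1 ω) (Tε i) P)
    -- ... and have identity mean
    (hmean : ∀ i, ∀ y ∈ Set.Icc (0:ℝ) 1, ∫ ω, Tε i ω y ∂P = y) :
    ∀ α ∈ Set.Icc (-1 : ℝ) 1, Mobj P T a0 ≤ Mobj P T α := by
  intro α hα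
  have hpast : Measurable fun ω (j : {j : ℤ // j < 1}) => T j.1 ω :=
    measurable_pi_lambda _ fun j => hTmeas j.1
  refine mobj_le_mobj_of_indep hS (Ioo_subset_Icc_self ha0) hα hT hTmeas (hTε 1) (hTεmeas 1)
    (by simpa using hmodel 1) (hmean 1) hpast.comap_le (fun x _ => ?_)
    ((IndepFun_iff_Indep _ _ _).1 (hindep_past 1))
  exact (measurable_pi_apply x).comp
    ((measurable_pi_apply (⟨0, zero_lt_one⟩ : {j : ℤ // j < 1})).comp
      (comap_measurable fun ω (j : {j : ℤ // j < 1}) => T j.1 ω))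

/-- for the stationary autoregressive system
`T_i = T_{ε_i} ∘ S ∘ [𝛂 T_{i−1}]`, the true parameter `𝛂` minimizes `M` on `[−1,1]`. -/
theorem true_alpha_minimizes {Ω : Type*} [MeasurableSpace Ω]
    (P : Measure Ω) [IsProbabilityMeasure P]
    (S : ℝ → ℝ) (hS : InT S) (a0 : ℝ) (ha0 : a0 ∈ Set.Ioo (-1 : ℝ) 1)
    (T Tε : ℤ → Ω → ℝ → ℝ)
    (hT : ∀ i ω, InT (T i ω)) (hTε : ∀ i ω, InT (Tε i ω))
    (hTmeas : ∀ i, Measurable (T i)) (hTεmeas : ∀ i, Measurable (Tε i))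
    -- the autoregressive model equation
    (hmodel : ∀ i ω, ∀ x ∈ Set.Icc (0:ℝ) 1, T i ω x = Tε i ω (S (contr a0 (T (i-1) ω) x)))
    -- the noise maps are i.i.d. ...
    (hid : ∀ i j, Measure.map (Tε i) P = Measure.map (Tε j) P)
    (hindep_noise : iIndepFun Tε P)
    -- ... each independent of the past of the chain ...
    (hindep_past : ∀ i : ℤ, IndepFun (fun ω => fun j : {j : ℤ // j < i} => T j.1 ω) (Tε i) P)
    -- ... and have identity mean
    (hmean : ∀ i, ∀ y ∈ Set.Icc (0:ℝ) 1, ∫ ω, Tε i ω y ∂P = y)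
    -- stationarity: all pairs (T_{i-1}, T_i) have the same joint law
    (hstat : ∀ i j : ℤ, Measure.map (fun ω => (T (i-1) ω, T i ω)) P
      = Measure.map (fun ω => (T (j-1) ω, T j ω)) P) :
    ∀ α ∈ Set.Icc (-1 : ℝ) 1, Mobj P T a0 ≤ Mobj P T α :=
  true_alpha_minimizes_general P S hS a0 ha0 T Tε hT hTε hTmeas hTεmeas hmodel hindep_past hmean
end
end

section
/- Let S ∈ 𝒯 be L_S-Lipschitz, let α ∈ [0,1], and let (T_{ε_i})_{i∈ℤ} be i.i.d. random elements of 𝒯 satisfying E|T_{ε_i}(x) − T_{ε_i}(y)|² ≤ L_ε²·|x−y|² for all x,y ∈ [0,1]. Define Φ_i(T) = T_{ε_i} ∘ S ∘ [αT] and the m-fold composition Φ̃_{i,m}(T) = Φ_i ∘ Φ_{i−1} ∘ ⋯ ∘ Φ_{i−m+1}(T). If α·L_S·L_ε < 1, then for all i ∈ ℤ, m ∈ ℕ, and all T, Q ∈ 𝒯: E‖Φ̃_{i,m}(Q) − Φ̃_{i,m}(T)‖₂² ≤ (α·L_S·L_ε)^{2m}·‖Q − T‖₂²; in particular the geometric moment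 contracting condition holds with exponent η = 2. -/
open MeasureTheory ProbabilityTheory

noncomputable section

/-- The α-contraction `[αT]` for `α ∈ [0,1]`. -/
def contrNN (α : ℝ) (T : ℝ → ℝ) (x : ℝ) : ℝ := x + α * (T x - x)

/-- The iterated random maps: `iter Tε S α m i T ω = Φ̃_{i,m}(T)(ω)`, where
`Φ_i(T) = T_{ε_i} ∘ S ∘ [αT]` and `Φ̃_{i,m} = Φ_i ∘ Φ_{i−1} ∘ ⋯ ∘ Φ_{i−m+1}`. -/
def iter {Ω : Type*} (Tε : ℤ → Ω → ℝ → ℝ) (S : ℝ → ℝ) (α : ℝ) :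
    ℕ → ℤ → (ℝ → ℝ) → Ω → ℝ → ℝ
  | 0, _, T, _, x => T x
  | m + 1, i, T, ω, x => Tε i ω (S (contrNN α (fun y => iter Tε S α m (i - 1) T ω y) x))

/-!
Fix `x ∈ [0,1]`. The values `Φ̃_{i-1,m}(Q)(x)` and `Φ̃_{i-1,m}(T)(x)` depend only on the noise up
to time `i - 1`, hence are independent of `T_{ε_i}`. Integrating first over `T_{ε_i}` and using its
square-mean Lipschitz bound, then the Lipschitz bound of `S` and
`[αQ](x) - [αT](x) = α (Q x - T x)`, gives
`E|Φ̃_{i,m+1}(Q)(x) - Φ̃_{i,m+1}(T)(x)|² ≤ (α L_S L_ε)² E|Φ̃_{i-1,m}(Q)(x) - Φ̃_{i-1,m}(T)(x)|²`.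
Integrating in `x` (Fubini) and inducting on `m` gives the bound. All evaluations at random points
are measurable because every map involved is continuous on `[0,1]`, and Carathéodory functions are
jointly measurable.
-/

open Set Function unitInterval

section Measurability

variable {α : Type*} {mα : MeasurableSpace α} {s : Set ℝ} {f : α → ℝ → ℝ}

theorem measurable_uncurry_restrict_of_continuousOn (hc : ∀ a, ContinuousOn (f a) s)
    (hm : ∀ x ∈ s, Measurable fun a => f a x) :
    Measurable fun p : α × s => f p.1 p.2 :=
  (measurable_uncurry_of_continuous_of_measurable (u := fun (x : s) a => f a x)
    (fun a => (hc a).domRestrict) (fun x => hm x x.2)).comp measurable_swap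

theorem measurable_apply_of_continuousOn (hc : ∀ a, ContinuousOn (f a) s)
    (hm : ∀ x ∈ s, Measurable fun a => f a x) {g : α → ℝ} (hg : Measurable g)
    (hgs : ∀ a, g a ∈ s) : Measurable fun a => f a (g a) :=
  (measurable_uncurry_restrict_of_continuousOn hc hm).comp
    (measurable_id.prodMk (hg.subtype_mk (h := hgs)))

end Measurability

lemma sq_sub_le_one {a b : ℝ} (ha : a ∈ I) (hb : b ∈ I) : (a - b) ^ 2 ≤ 1 := by
  obtain ⟨ha0, ha1⟩ := ha
  obtain ⟨hb0, hb1⟩ := hb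
  nlinarith

lemma integrable_sq_sub_of_mem_unitInterval {β : Type*} [MeasurableSpace β] {μ : Measure β}
    [IsFiniteMeasure μ] {f g : β → ℝ} (hf : Measurable f) (hg : Measurable g)
    (hfI : ∀ b, f b ∈ I) (hgI : ∀ b, g b ∈ I) : Integrable (fun b => (f b - g b) ^ 2) μ :=
  .of_bound ((hf.sub hg).pow_const 2).aestronglyMeasurable 1 <| ae_of_all _ fun b => by
    rw [Real.norm_eq_abs, abs_of_nonneg (sq_nonneg _)]
    exact sq_sub_le_one (hfI b) (hgI b)

/-- Unlike on `ℝ → ℝ`, evaluation `(t, x) ↦ t x` is jointly measurable on this subspace. -/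
abbrev ContSelfMap : Type := {t : ℝ → ℝ // ContinuousOn t I ∧ MapsTo t I I}

theorem integral_sq_sub_apply_le_of_indepFun {Ω : Type*} [MeasurableSpace Ω] {P : Measure Ω}
    [IsProbabilityMeasure P] {X : Ω → ℝ → ℝ} (hX : Measurable X)
    (hXc : ∀ ω, ContinuousOn (X ω) I) (hXI : ∀ ω, MapsTo (X ω) I I)
    {A B : Ω → ℝ} (hA : Measurable A) (hB : Measurable B) (hAI : ∀ ω, A ω ∈ I)
    (hBI : ∀ ω, B ω ∈ I) (hind : IndepFun (fun ω => (A ω, B ω)) X P) {L : ℝ}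
    (hL : ∀ a ∈ I, ∀ b ∈ I, ∫ ω, (X ω a - X ω b) ^ 2 ∂P ≤ L ^ 2 * (a - b) ^ 2) :
    ∫ ω, (X ω (A ω) - X ω (B ω)) ^ 2 ∂P ≤ L ^ 2 * ∫ ω, (A ω - B ω) ^ 2 ∂P := by
  -- `projIcc` makes `Y` a function of `(A, B)`, so that `IndepFun.comp` applies.
  let proj : ℝ → I := projIcc 0 1 zero_le_one
  let Y : Ω → I × I := fun ω => (proj (A ω), proj (B ω))
  let X' : Ω → ContSelfMap := fun ω => ⟨X ω, hXc ω, hXI ω⟩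
  let F : (I × I) × ContSelfMap → ℝ := fun p => (p.2.1 p.1.1 - p.2.1 p.1.2) ^ 2
  have hproj : Measurable proj := continuous_projIcc.measurable
  have hY : Measurable Y := (hproj.comp hA).prodMk (hproj.comp hB)
  have hX' : Measurable X' := hX.subtype_mk
  have hev : Measurable fun p : ContSelfMap × I => p.1.1 p.2 :=
    measurable_uncurry_restrict_of_continuousOn (f := Subtype.val) (fun t => t.2.1)
      (fun x _ => (measurable_pi_apply x).comp measurable_subtype_coe)
  have hF : Measurable F :=
    ((hev.comp (measurable_snd.prodMk (measurable_fst.comp measurable_fst))).sub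
      (hev.comp (measurable_snd.prodMk (measurable_snd.comp measurable_fst)))).pow_const 2
  have hFI : ∀ p, F p ≤ 1 := fun p => sq_sub_le_one (p.2.2.2 p.1.1.2) (p.2.2.2 p.1.2.2)
  have hind' : IndepFun Y X' P := by
    have := hind.comp (φ := fun p : ℝ × ℝ => (proj p.1, proj p.2)) (ψ := id)
      ((hproj.comp measurable_fst).prodMk (hproj.comp measurable_snd)) measurable_id
    rw [IndepFun_iff_Indep] at this ⊢
    convert this using 2
    exacts [rfl, MeasurableSpace.comap_comp]
  have hmap : P.map (fun ω => (Y ω, X' ω)) = (P.map Y).prod (P.map X') :=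
    (indepFun_iff_map_prod_eq_prod_map_map hY.aemeasurable hX'.aemeasurable).1 hind'
  have hFint : Integrable F ((P.map Y).prod (P.map X')) :=
    .of_bound hF.aestronglyMeasurable 1 <| ae_of_all _ fun p => by
      rw [Real.norm_eq_abs, abs_of_nonneg (sq_nonneg _)]
      exact hFI p
  have hFY : ∀ ω, F (Y ω, X' ω) = (X ω (A ω) - X ω (B ω)) ^ 2 := fun ω => by
    simp [F, Y, X', proj, projIcc_of_mem _ (hAI ω), projIcc_of_mem _ (hBI ω)]
  have hinner : ∀ y : I × I, ∫ t, F (y, t) ∂(P.map X') ≤ L ^ 2 * ((y.1 : ℝ) - y.2) ^ 2 :=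
    fun y => by
      have hFy : Measurable fun t => F (y, t) := hF.comp measurable_prodMk_left
      rw [integral_map hX'.aemeasurable hFy.aestronglyMeasurable]
      exact hL _ y.1.2 _ y.2.2
  have hdiff : Measurable fun y : I × I => ((y.1 : ℝ) - y.2) ^ 2 := by fun_prop
  calc ∫ ω, (X ω (A ω) - X ω (B ω)) ^ 2 ∂P
      = ∫ p, F p ∂(P.map (fun ω => (Y ω, X' ω))) := by
        rw [integral_map (hY.prodMk hX').aemeasurable hF.aestronglyMeasurable]
        simp only [hFY]
    _ = ∫ y, ∫ t, F (y, t) ∂(P.map X') ∂(P.map Y) := by rw [hmap, integral_prod F hFint]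
    _ ≤ ∫ y, L ^ 2 * ((y.1 : ℝ) - y.2) ^ 2 ∂(P.map Y) :=
        integral_mono hFint.integral_prod_left
          ((integrable_sq_sub_of_mem_unitInterval (by fun_prop) (by fun_prop)
            (fun y => y.1.2) (fun y => y.2.2)).const_mul _) hinner
    _ = L ^ 2 * ∫ ω, (A ω - B ω) ^ 2 ∂P := by
        rw [integral_map hY.aemeasurable (hdiff.const_mul _).aestronglyMeasurable,
          integral_const_mul]
        simp [Y, proj, projIcc_of_mem _ (hAI _), projIcc_of_mem _ (hBI _)]

lemma contrNN_mem_unitInterval {α x : ℝ} {T : ℝ → ℝ} (hα : α ∈ I) (hx : x ∈ I)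
    (hTx : T x ∈ I) : contrNN α T x ∈ I := by
  obtain ⟨hα0, hα1⟩ := hα
  obtain ⟨hx0, hx1⟩ := hx
  obtain ⟨hT0, hT1⟩ := hTx
  constructor <;> unfold contrNN <;> nlinarith

lemma contrNN_sub_contrNN (α : ℝ) (T Q : ℝ → ℝ) (x : ℝ) :
    contrNN α Q x - contrNN α T x = α * (Q x - T x) := by
  unfold contrNN; ring

lemma sq_sub_comp_contrNN_le {S : ℝ → ℝ} {LS α x : ℝ} {T Q : ℝ → ℝ}
    (hSlip : ∀ x ∈ I, ∀ y ∈ I, |S x - S y| ≤ LS * |x - y|) (hα : α ∈ I) (hx : x ∈ I)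
    (hQx : Q x ∈ I) (hTx : T x ∈ I) :
    (S (contrNN α Q x) - S (contrNN α T x)) ^ 2 ≤ (α * LS) ^ 2 * (Q x - T x) ^ 2 := by
  have h := hSlip _ (contrNN_mem_unitInterval hα hx hQx) _ (contrNN_mem_unitInterval hα hx hTx)
  rw [contrNN_sub_contrNN, abs_mul] at h
  calc (S (contrNN α Q x) - S (contrNN α T x)) ^ 2
      = |S (contrNN α Q x) - S (contrNN α T x)| ^ 2 := (sq_abs _).symm
    _ ≤ (LS * (|α| * |Q x - T x|)) ^ 2 := pow_le_pow_left₀ (abs_nonneg _) h 2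
    _ = (α * LS) ^ 2 * (Q x - T x) ^ 2 := by simp only [mul_pow, sq_abs]; ring

lemma continuousOn_contrNN {α : ℝ} {T : ℝ → ℝ} {s : Set ℝ} (hT : ContinuousOn T s) :
    ContinuousOn (contrNN α T) s := by
  unfold contrNN; fun_prop

section Iterates

variable {Ω : Type*} {Tε : ℤ → Ω → ℝ → ℝ} {S : ℝ → ℝ} {α : ℝ} {T : ℝ → ℝ}

lemma mapsTo_iter (hS : MapsTo S I I) (hTε : ∀ i ω, MapsTo (Tε i ω) I I) (hα : α ∈ I)
    (hT : MapsTo T I I) (m : ℕ) (i : ℤ) (ω : Ω) : MapsTo (iter Tε S α m i T ω) I I := by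
  induction m generalizing i with
  | zero => exact hT
  | succ m ih => exact fun x hx => hTε i ω (hS (contrNN_mem_unitInterval hα hx (ih (i - 1) hx)))

lemma continuousOn_iter (hS : InT S) (hTε : ∀ i ω, InT (Tε i ω)) (hα : α ∈ I) (hT : InT T)
    (m : ℕ) (i : ℤ) (ω : Ω) : ContinuousOn (iter Tε S α m i T ω) I := by
  induction m generalizing i with
  | zero => exact hT.1
  | succ m ih =>
    have hc : MapsTo (contrNN α (iter Tε S α m (i - 1) T ω)) I I := fun x hx =>
      contrNN_mem_unitInterval hα hx
        (mapsTo_iter hS.2.2.1 (fun i ω => (hTε i ω).2.2.1) hα hT.2.2.1 m (i - 1) ω hx)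
    exact (hTε i ω).1.comp (hS.1.comp (continuousOn_contrNN (ih (i - 1))) hc)
      (hS.2.2.1.comp hc)

variable {mΩ : MeasurableSpace Ω}

abbrev pastMeasurableSpace (Tε : ℤ → Ω → ℝ → ℝ) (j : ℤ) : MeasurableSpace Ω :=
  ⨆ k ∈ Iic j, MeasurableSpace.comap (Tε k) MeasurableSpace.pi

lemma pastMeasurableSpace_mono : Monotone (pastMeasurableSpace Tε) :=
  fun _ _ hjk => biSup_mono fun _ hk => Iic_subset_Iic.2 hjk hk

lemma pastMeasurableSpace_le (hTεmeas : ∀ i, Measurable (Tε i)) (j : ℤ) :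
    pastMeasurableSpace Tε j ≤ mΩ :=
  iSup₂_le fun k _ => (hTεmeas k).comap_le

lemma measurable_pastMeasurableSpace (j : ℤ) : Measurable[pastMeasurableSpace Tε j] (Tε j) :=
  Measurable.of_comap_le <| le_iSup₂
    (f := fun k (_ : k ∈ Iic j) => MeasurableSpace.comap (Tε k) MeasurableSpace.pi) j self_mem_Iic

lemma indep_pastMeasurableSpace_comap {P : Measure Ω} (hTεmeas : ∀ i, Measurable (Tε i))
    (hindep : iIndepFun Tε P) (j : ℤ) :
    Indep (pastMeasurableSpace Tε (j - 1)) (MeasurableSpace.comap (Tε j) MeasurableSpace.pi) P := by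
  have := indep_iSup_of_disjoint (fun k => (hTεmeas k).comap_le) hindep.iIndep
    (S := Iic (j - 1)) (T := {j}) (disjoint_singleton_right.2 (by simp))
  rwa [iSup_singleton] at this

lemma measurable_apply_contrNN_apply (hS : ContinuousOn S I) (hα : α ∈ I) {g : Ω → ℝ → ℝ} {x : ℝ}
    (hx : x ∈ I) (hg : Measurable fun ω => g ω x) (hgI : ∀ ω, g ω x ∈ I) :
    Measurable fun ω => S (contrNN α (g ω) x) :=
  measurable_apply_of_continuousOn (f := fun _ => S) (fun _ => hS) (fun _ _ => measurable_const)
    (measurable_const.add ((hg.sub measurable_const).const_mul α))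
    fun ω => contrNN_mem_unitInterval hα hx (hgI ω)

lemma measurable_iter_apply (hS : InT S) (hTε : ∀ i ω, InT (Tε i ω)) (hα : α ∈ I) (hT : InT T)
    (m : ℕ) (j : ℤ) {x : ℝ} (hx : x ∈ I) :
    Measurable[pastMeasurableSpace Tε j] fun ω => iter Tε S α m j T ω x := by
  induction m generalizing j with
  | zero => exact measurable_const
  | succ m ih =>
    have hmem : ∀ ω, iter Tε S α m (j - 1) T ω x ∈ I := fun ω =>
      mapsTo_iter hS.2.2.1 (fun i ω => (hTε i ω).2.2.1) hα hT.2.2.1 m (j - 1) ω hx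
    exact measurable_apply_of_continuousOn (mα := pastMeasurableSpace Tε j) (fun ω => (hTε j ω).1)
      (fun y _ => (measurable_pi_apply y).comp (measurable_pastMeasurableSpace j))
      (measurable_apply_contrNN_apply hS.1 hα hx
        ((ih (j - 1)).mono (pastMeasurableSpace_mono (by omega)) le_rfl) hmem)
      fun ω => hS.2.2.1 (contrNN_mem_unitInterval hα hx (hmem ω))

end Iterates

section Fubini

variable {Ω : Type*} [MeasurableSpace Ω] {P : Measure Ω} [IsFiniteMeasure P]

lemma integrable_uncurry_of_continuousOn {f : Ω → ℝ → ℝ} (hc : ∀ ω, ContinuousOn (f ω) I)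
    (hm : ∀ x ∈ I, Measurable fun ω => f ω x) {C : ℝ} (hb : ∀ ω, ∀ x ∈ I, |f ω x| ≤ C) :
    Integrable (uncurry f) (P.prod (volume.restrict I)) := by
  have hI : ∀ᵐ p ∂P.prod (volume.restrict I), p.2 ∈ I :=
    Measure.quasiMeasurePreserving_snd.ae (ae_restrict_mem measurableSet_Icc)
  have hproj : Measurable fun p : Ω × ℝ => f p.1 (projIcc 0 1 zero_le_one p.2) :=
    measurable_apply_of_continuousOn (f := fun p : Ω × ℝ => f p.1) (fun p => hc p.1)
      (fun x hx => (hm x hx).comp measurable_fst)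
      ((continuous_subtype_val.comp continuous_projIcc).measurable.comp measurable_snd)
      fun p => Subtype.prop _
  refine .of_bound (hproj.aestronglyMeasurable.congr ?_) C ?_
  · filter_upwards [hI] with p hp
    simp [projIcc_of_mem _ hp, uncurry]
  · filter_upwards [hI] with p hp using hb p.1 p.2 hp

lemma integral_intervalIntegral_eq_setIntegral_integral {f : Ω → ℝ → ℝ}
    (hf : Integrable (uncurry f) (P.prod (volume.restrict I))) :
    ∫ ω, (∫ x in (0 : ℝ)..1, f ω x) ∂P = ∫ x in I, ∫ ω, f ω x ∂P := by
  simp_rw [intervalIntegral.integral_of_le zero_le_one, ← integral_Icc_eq_integral_Ioc]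
  exact integral_integral_swap hf

end Fubini

section Contraction

variable {Ω : Type*} {mΩ : MeasurableSpace Ω} {P : Measure Ω} [IsProbabilityMeasure P]
  {Tε : ℤ → Ω → ℝ → ℝ} {S : ℝ → ℝ} {α LS Lε : ℝ} {T Q : ℝ → ℝ}

lemma integral_sq_sub_iter_succ_le (hS : InT S)
    (hSlip : ∀ x ∈ I, ∀ y ∈ I, |S x - S y| ≤ LS * |x - y|) (hα : α ∈ I)
    (hTε : ∀ i ω, InT (Tε i ω)) (hTεmeas : ∀ i, Measurable (Tε i)) (hindep : iIndepFun Tε P)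
    (hεlip : ∀ i, ∀ x ∈ I, ∀ y ∈ I, ∫ ω, (Tε i ω x - Tε i ω y) ^ 2 ∂P ≤ Lε ^ 2 * (x - y) ^ 2)
    (hT : InT T) (hQ : InT Q) (m : ℕ) (i : ℤ) {x : ℝ} (hx : x ∈ I) :
    ∫ ω, (iter Tε S α (m + 1) i Q ω x - iter Tε S α (m + 1) i T ω x) ^ 2 ∂P ≤
      (α * LS * Lε) ^ 2 *
        ∫ ω, (iter Tε S α m (i - 1) Q ω x - iter Tε S α m (i - 1) T ω x) ^ 2 ∂P := by
  set Qm : Ω → ℝ := fun ω => iter Tε S α m (i - 1) Q ω x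
  set Tm : Ω → ℝ := fun ω => iter Tε S α m (i - 1) T ω x
  set A : Ω → ℝ := fun ω => S (contrNN α (iter Tε S α m (i - 1) Q ω) x)
  set B : Ω → ℝ := fun ω => S (contrNN α (iter Tε S α m (i - 1) T ω) x)
  have hTεI : ∀ i ω, MapsTo (Tε i ω) I I := fun i ω => (hTε i ω).2.2.1
  have hQmI : ∀ ω, Qm ω ∈ I := fun ω => mapsTo_iter hS.2.2.1 hTεI hα hQ.2.2.1 m (i - 1) ω hx
  have hTmI : ∀ ω, Tm ω ∈ I := fun ω => mapsTo_iter hS.2.2.1 hTεI hα hT.2.2.1 m (i - 1) ω hx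
  have hQm := measurable_iter_apply hS hTε hα hQ m (i - 1) hx
  have hTm := measurable_iter_apply hS hTε hα hT m (i - 1) hx
  have hA : Measurable[pastMeasurableSpace Tε (i - 1)] A :=
    measurable_apply_contrNN_apply hS.1 hα hx hQm hQmI
  have hB : Measurable[pastMeasurableSpace Tε (i - 1)] B :=
    measurable_apply_contrNN_apply hS.1 hα hx hTm hTmI
  have hAI : ∀ ω, A ω ∈ I := fun ω => hS.2.2.1 (contrNN_mem_unitInterval hα hx (hQmI ω))
  have hBI : ∀ ω, B ω ∈ I := fun ω => hS.2.2.1 (contrNN_mem_unitInterval hα hx (hTmI ω))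
  have hpast := pastMeasurableSpace_le hTεmeas (i - 1)
  have hind : IndepFun (fun ω => (A ω, B ω)) (Tε i) P :=
    (IndepFun_iff_Indep _ _ _).2 <| indep_of_indep_of_le_left
      (indep_pastMeasurableSpace_comap hTεmeas hindep i) (hA.prodMk hB).comap_le
  have hlip : ∀ ω, (A ω - B ω) ^ 2 ≤ (α * LS) ^ 2 * (Qm ω - Tm ω) ^ 2 := fun ω =>
    sq_sub_comp_contrNN_le hSlip hα hx (hQmI ω) (hTmI ω)
  calc ∫ ω, (Tε i ω (A ω) - Tε i ω (B ω)) ^ 2 ∂P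
      ≤ Lε ^ 2 * ∫ ω, (A ω - B ω) ^ 2 ∂P :=
        integral_sq_sub_apply_le_of_indepFun (hTεmeas i) (fun ω => (hTε i ω).1) (hTεI i)
          (hA.mono hpast le_rfl) (hB.mono hpast le_rfl) hAI hBI hind (hεlip i)
    _ ≤ Lε ^ 2 * ∫ ω, (α * LS) ^ 2 * (Qm ω - Tm ω) ^ 2 ∂P := by
        refine mul_le_mul_of_nonneg_left (integral_mono ?_ ?_ hlip) (sq_nonneg _)
        exacts [integrable_sq_sub_of_mem_unitInterval (μ := P) (hA.mono hpast le_rfl)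
            (hB.mono hpast le_rfl) hAI hBI,
          (integrable_sq_sub_of_mem_unitInterval (μ := P) (hQm.mono hpast le_rfl)
            (hTm.mono hpast le_rfl) hQmI hTmI).const_mul _]
    _ = (α * LS * Lε) ^ 2 * ∫ ω, (Qm ω - Tm ω) ^ 2 ∂P := by rw [integral_const_mul]; ring

lemma integrable_uncurry_sq_sub_iter (hS : InT S) (hα : α ∈ I) (hTε : ∀ i ω, InT (Tε i ω))
    (hTεmeas : ∀ i, Measurable (Tε i)) (hT : InT T) (hQ : InT Q) (m : ℕ) (j : ℤ) :
    Integrable (uncurry fun ω x => (iter Tε S α m j Q ω x - iter Tε S α m j T ω x) ^ 2)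
      (P.prod (volume.restrict I)) := by
  have hTεI : ∀ i ω, MapsTo (Tε i ω) I I := fun i ω => (hTε i ω).2.2.1
  have hpast := pastMeasurableSpace_le hTεmeas j
  refine integrable_uncurry_of_continuousOn
    (fun ω => ((continuousOn_iter hS hTε hα hQ m j ω).sub
      (continuousOn_iter hS hTε hα hT m j ω)).pow 2)
    (fun x hx => (((measurable_iter_apply hS hTε hα hQ m j hx).sub
      (measurable_iter_apply hS hTε hα hT m j hx)).pow_const 2).mono hpast le_rfl)
    (C := 1) fun ω x hx => ?_
  rw [abs_of_nonneg (sq_nonneg _)]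
  exact sq_sub_le_one (mapsTo_iter hS.2.2.1 hTεI hα hQ.2.2.1 m j ω hx)
    (mapsTo_iter hS.2.2.1 hTεI hα hT.2.2.1 m j ω hx)

lemma integral_intervalIntegral_sq_sub_iter_succ_le (hS : InT S)
    (hSlip : ∀ x ∈ I, ∀ y ∈ I, |S x - S y| ≤ LS * |x - y|) (hα : α ∈ I)
    (hTε : ∀ i ω, InT (Tε i ω)) (hTεmeas : ∀ i, Measurable (Tε i)) (hindep : iIndepFun Tε P)
    (hεlip : ∀ i, ∀ x ∈ I, ∀ y ∈ I, ∫ ω, (Tε i ω x - Tε i ω y) ^ 2 ∂P ≤ Lε ^ 2 * (x - y) ^ 2)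
    (hT : InT T) (hQ : InT Q) (m : ℕ) (i : ℤ) :
    ∫ ω, (∫ x in (0 : ℝ)..1,
        (iter Tε S α (m + 1) i Q ω x - iter Tε S α (m + 1) i T ω x) ^ 2) ∂P ≤
      (α * LS * Lε) ^ 2 * ∫ ω, (∫ x in (0 : ℝ)..1,
        (iter Tε S α m (i - 1) Q ω x - iter Tε S α m (i - 1) T ω x) ^ 2) ∂P := by
  have hsucc := integrable_uncurry_sq_sub_iter hS hα hTε hTεmeas hT hQ (m + 1) i (P := P)
  have hprev := integrable_uncurry_sq_sub_iter hS hα hTε hTεmeas hT hQ m (i - 1) (P := P)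
  rw [integral_intervalIntegral_eq_setIntegral_integral hsucc,
    integral_intervalIntegral_eq_setIntegral_integral hprev, ← integral_const_mul]
  exact setIntegral_mono_on hsucc.integral_prod_right (hprev.integral_prod_right.const_mul _)
    measurableSet_Icc fun x hx =>
      integral_sq_sub_iter_succ_le hS hSlip hα hTε hTεmeas hindep hεlip hT hQ m i hx

end Contraction

theorem geometric_moment_contraction_general {Ω : Type*} [MeasurableSpace Ω]
    (P : Measure Ω) [IsProbabilityMeasure P]
    (S : ℝ → ℝ) (hS : InT S) (LS : ℝ)
    (hSlip : ∀ x ∈ Set.Icc (0:ℝ) 1, ∀ y ∈ Set.Icc (0:ℝ) 1, |S x - S y| ≤ LS * |x - y|)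
    (α : ℝ) (hα : α ∈ Set.Icc (0:ℝ) 1)
    (Tε : ℤ → Ω → ℝ → ℝ) (hTε : ∀ i ω, InT (Tε i ω))
    (hTεmeas : ∀ i, Measurable (Tε i))
    -- the noise maps are i.i.d. ...
    (hindep : iIndepFun Tε P)
    -- ... with square-mean Lipschitz constant `L_ε`
    (Lε : ℝ)
    (hεlip : ∀ i, ∀ x ∈ Set.Icc (0:ℝ) 1, ∀ y ∈ Set.Icc (0:ℝ) 1,
      ∫ ω, (Tε i ω x - Tε i ω y)^2 ∂P ≤ Lε^2 * (x - y)^2) :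
    ∀ (i : ℤ) (m : ℕ) (T Q : ℝ → ℝ), InT T → InT Q →
      (∫ ω, (∫ x in (0:ℝ)..1, (iter Tε S α m i Q ω x - iter Tε S α m i T ω x)^2) ∂P)
        ≤ (α * LS * Lε)^(2*m) * ∫ x in (0:ℝ)..1, (Q x - T x)^2 := by
  intro i m T Q hT hQ
  induction m generalizing i with
  | zero => simp [iter]
  | succ m ih =>
    calc _ ≤ (α * LS * Lε) ^ 2 * ∫ ω, (∫ x in (0 : ℝ)..1,
            (iter Tε S α m (i - 1) Q ω x - iter Tε S α m (i - 1) T ω x) ^ 2) ∂P :=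
          integral_intervalIntegral_sq_sub_iter_succ_le hS hSlip hα hTε hTεmeas hindep hεlip
            hT hQ m i
      _ ≤ (α * LS * Lε) ^ 2 * ((α * LS * Lε) ^ (2 * m) * ∫ x in (0 : ℝ)..1, (Q x - T x) ^ 2) :=
          mul_le_mul_of_nonneg_left (ih (i - 1)) (sq_nonneg _)
      _ = _ := by ring

/-- if `α L_S L_ε < 1` then the iterated system is geometrically moment
contracting with exponent `η = 2`:
`E‖Φ̃_{i,m}(Q) − Φ̃_{i,m}(T)‖₂² ≤ (α L_S L_ε)^{2m} ‖Q − T‖₂²`. -/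
theorem geometric_moment_contraction {Ω : Type*} [MeasurableSpace Ω]
    (P : Measure Ω) [IsProbabilityMeasure P]
    (S : ℝ → ℝ) (hS : InT S) (LS : ℝ) (hLS : 0 ≤ LS)
    (hSlip : ∀ x ∈ Set.Icc (0:ℝ) 1, ∀ y ∈ Set.Icc (0:ℝ) 1, |S x - S y| ≤ LS * |x - y|)
    (α : ℝ) (hα : α ∈ Set.Icc (0:ℝ) 1)
    (Tε : ℤ → Ω → ℝ → ℝ) (hTε : ∀ i ω, InT (Tε i ω))
    (hTεmeas : ∀ i, Measurable (Tε i))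
    -- the noise maps are i.i.d. ...
    (hid : ∀ i j, Measure.map (Tε i) P = Measure.map (Tε j) P)
    (hindep : iIndepFun Tε P)
    -- ... with square-mean Lipschitz constant `L_ε`
    (Lε : ℝ) (hLε : 0 ≤ Lε)
    (hεlip : ∀ i, ∀ x ∈ Set.Icc (0:ℝ) 1, ∀ y ∈ Set.Icc (0:ℝ) 1,
      ∫ ω, (Tε i ω x - Tε i ω y)^2 ∂P ≤ Lε^2 * (x - y)^2)
    (hcontr : α * LS * Lε < 1) :
    ∀ (i : ℤ) (m : ℕ) (T Q : ℝ → ℝ), InT T → InT Q →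
      (∫ ω, (∫ x in (0:ℝ)..1, (iter Tε S α m i Q ω x - iter Tε S α m i T ω x)^2) ∂P)
        ≤ (α * LS * Lε)^(2*m) * ∫ x in (0:ℝ)..1, (Q x - T x)^2 :=
  geometric_moment_contraction_general P S hS LS hSlip α hα Tε hTε hTεmeas hindep Lε hεlip
end
end

section
/- Let α ∈ [0,1), let T be a random element of 𝒯, and let T_ε be a random element of 𝒯 independent of T with E[T_ε(y)] = y for all y ∈ [0,1]. If the random map T_ε ∘ [αT] has the same law as T (i.e., T is a stationary solution of the iteration T_i = T_{ε_i} ∘ [α T_{i−1}]), then E[T(x)] = x for almost every x ∈ [0,1]; in words, a stationary solution of the Zhu–Müller iteration necessarily has the identity as its mean map. -/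
/-!
Fix `x ∈ [0,1]` and let `m(x) = E[T(x)]`. Stationarity gives `E[T_ε([αT](x))] = m(x)`, while
independence and the identity mean of `T_ε` give `E[T_ε([αT](x))] = E[[αT](x)] = x + α (m(x) - x)`.
Hence `(1 - α)(m(x) - x) = 0`.

The independence step is Fubini for the law of the pair `([αT](x), T_ε)`. Evaluation `(y, f) ↦ f y`
is not jointly measurable on `ℝ × (ℝ → ℝ)`, but it is once `y` ranges over a set `s` and `f` over
functions continuous on `s`, so the pair is first pushed into that subtype.
-/

open MeasureTheory ProbabilityTheory

noncomputable section

theorem ProbabilityTheory.IndepFun.codRestrict {Ω β γ : Type*} [MeasurableSpace Ω]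
    [MeasurableSpace β] [MeasurableSpace γ] {μ : Measure Ω} {f : Ω → β} {g : Ω → γ}
    {s : Set β} {t : Set γ} (hfg : IndepFun f g μ) (hf : ∀ ω, f ω ∈ s) (hg : ∀ ω, g ω ∈ t) :
    IndepFun (s.codRestrict f hf) (t.codRestrict g hg) μ := by
  rw [IndepFun_iff_Indep] at hfg ⊢
  simp only [Subtype.instMeasurableSpace, MeasurableSpace.comap_comp]
  exact hfg

section Evaluation

variable {X : Type*} [TopologicalSpace X] [TopologicalSpace.MetrizableSpace X]
  [SecondCountableTopology X] [MeasurableSpace X] [OpensMeasurableSpace X]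

theorem measurable_eval_of_continuousOn {s : Set X} {K : Set (X → ℝ)}
    (hK : ∀ f ∈ K, ContinuousOn f s) : Measurable fun p : s × K => p.2.1 p.1 :=
  measurable_uncurry_of_continuous_of_measurable (u := fun (y : s) (f : K) => f.1 y)
    (fun f => (hK f.1 f.2).domRestrict)
    (fun _ => (measurable_pi_apply _).comp measurable_subtype_coe)

theorem ProbabilityTheory.IndepFun.integral_apply_eq_integral_integral {Ω : Type*}
    [MeasurableSpace Ω] {P : Measure Ω} [IsProbabilityMeasure P] {s : Set X}
    {Y : Ω → X} {F : Ω → X → ℝ} {C : ℝ} (hind : IndepFun Y F P)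
    (hY : Measurable Y) (hF : Measurable F) (hYs : ∀ ω, Y ω ∈ s)
    (hFs : ∀ ω, ContinuousOn (F ω) s) (hFC : ∀ ω, ∀ y ∈ s, |F ω y| ≤ C) :
    ∫ ω, F ω (Y ω) ∂P = ∫ ω, ∫ ω', F ω' (Y ω) ∂P ∂P := by
  set K : Set (X → ℝ) := {f | ContinuousOn f s ∧ ∀ y ∈ s, |f y| ≤ C}
  set Y' := s.codRestrict Y hYs
  set F' := K.codRestrict F fun ω => ⟨hFs ω, hFC ω⟩
  have hY' : Measurable Y' := hY.subtype_mk
  have hF' : Measurable F' := hF.subtype_mk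
  set G : s × K → ℝ := fun p => p.2.1 p.1
  have hG : Measurable G := measurable_eval_of_continuousOn fun _ hf => hf.1
  have hG_int : Integrable G ((P.map Y').prod (P.map F')) :=
    Integrable.of_bound hG.aestronglyMeasurable C (ae_of_all _ fun p => p.2.2.2 _ p.1.2)
  calc ∫ ω, F ω (Y ω) ∂P = ∫ p, G p ∂(P.map fun ω => (Y' ω, F' ω)) :=
        (integral_map (hY'.prodMk hF').aemeasurable hG.aestronglyMeasurable).symm
    _ = ∫ y, ∫ f, G (y, f) ∂(P.map F') ∂(P.map Y') := by
        rw [(hind.codRestrict hYs _).map_prod_eq_prod_map_map hY'.aemeasurable hF'.aemeasurable,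
          integral_prod _ hG_int]
    _ = ∫ ω, ∫ ω', F ω' (Y ω) ∂P ∂P := by
        rw [integral_map hY'.aemeasurable
          hG.stronglyMeasurable.integral_prod_right'.aestronglyMeasurable]
        refine integral_congr_ae (ae_of_all _ fun ω => ?_)
        exact integral_map hF'.aemeasurable (hG.comp measurable_prodMk_left).aestronglyMeasurable

end Evaluation

theorem InT.abs_le_one {T : ℝ → ℝ} (hT : InT T) {y : ℝ} (hy : y ∈ Set.Icc 0 1) : |T y| ≤ 1 :=
  abs_le.2 ⟨by linarith [(hT.2.2.1 hy).1], (hT.2.2.1 hy).2⟩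

theorem contrNN_mem_of_convex {s : Set ℝ} (hs : Convex ℝ s) {α : ℝ} (hα : α ∈ Set.Icc 0 1)
    {T : ℝ → ℝ} {x : ℝ} (hx : x ∈ s) (hTx : T x ∈ s) : contrNN α T x ∈ s :=
  hs.add_smul_sub_mem hx hTx hα

theorem measurable_contrNN_apply (α x : ℝ) : Measurable fun T : ℝ → ℝ => contrNN α T x := by
  unfold contrNN
  fun_prop

theorem integral_contrNN {Ω : Type*} [MeasurableSpace Ω] {P : Measure Ω} [IsProbabilityMeasure P]
    {T : Ω → ℝ → ℝ} {α x : ℝ} (hTx : Integrable (fun ω => T ω x) P) :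
    ∫ ω, contrNN α (T ω) x ∂P = contrNN α (fun y => ∫ ω, T ω y ∂P) x := by
  have h_int : Integrable (fun ω => α * (T ω x - x)) P := (hTx.sub (integrable_const x)).const_mul α
  simp only [contrNN]
  rw [integral_add (integrable_const x) h_int,
    integral_const_mul, integral_sub hTx (integrable_const x)]
  simp

theorem contrNN_eq_self_iff {α : ℝ} (hα : α ≠ 1) {T : ℝ → ℝ} {x : ℝ} :
    contrNN α T x = T x ↔ T x = x := by
  have hα' : 1 - α ≠ 0 := sub_ne_zero.2 hα.symm
  constructor
  · intro h
    have : (1 - α) * (T x - x) = 0 := by unfold contrNN at h; linarith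
    linarith [(mul_eq_zero.1 this).resolve_left hα']
  · intro h
    simp [contrNN, h]

/-- if `T` is a stationary solution of the iteration `T_i = T_{ε_i} ∘ [α T_{i−1}]`
(i.e. `T_ε ∘ [αT]` has the same law as `T`, with `T_ε` independent of `T` and of identity mean),
then `E[T(x)] = x` for almost every `x ∈ [0,1]`. -/
theorem stationary_mean_identity {Ω : Type*} [MeasurableSpace Ω]
    (P : Measure Ω) [IsProbabilityMeasure P]
    (α : ℝ) (hα : α ∈ Set.Ico (0:ℝ) 1)
    (T Tε : Ω → ℝ → ℝ) (hT : ∀ ω, InT (T ω)) (hTε : ∀ ω, InT (Tε ω))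
    (hTmeas : Measurable T) (hTεmeas : Measurable Tε)
    (hT'meas : Measurable fun ω => fun x => Tε ω (contrNN α (T ω) x))
    (hindep : IndepFun T Tε P)
    (hmean : ∀ y ∈ Set.Icc (0:ℝ) 1, ∫ ω, Tε ω y ∂P = y)
    (hstat : Measure.map (fun ω => fun x => Tε ω (contrNN α (T ω) x)) P = Measure.map T P) :
    ∀ᵐ x ∂(volume.restrict (Set.Icc (0:ℝ) 1)), ∫ ω, T ω x ∂P = x := by
  filter_upwards [ae_restrict_mem measurableSet_Icc] with x hx
  have hY : ∀ ω, contrNN α (T ω) x ∈ Set.Icc 0 1 := fun ω =>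
    contrNN_mem_of_convex (convex_Icc 0 1) (Set.Ico_subset_Icc_self hα) hx ((hT ω).2.2.1 hx)
  have hTx_int : Integrable (fun ω => T ω x) P :=
    Integrable.of_bound ((measurable_pi_apply x).comp hTmeas).aestronglyMeasurable 1
      (ae_of_all _ fun ω => (hT ω).abs_le_one hx)
  have h_stat : ∫ ω, Tε ω (contrNN α (T ω) x) ∂P = ∫ ω, T ω x ∂P :=
    ((IdentDistrib.mk hT'meas.aemeasurable hTmeas.aemeasurable hstat).comp
      (measurable_pi_apply x)).integral_eq
  have hY_indep : IndepFun (fun ω => contrNN α (T ω) x) Tε P :=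
    hindep.comp (measurable_contrNN_apply α x) measurable_id
  have h_indep : ∫ ω, Tε ω (contrNN α (T ω) x) ∂P = ∫ ω, contrNN α (T ω) x ∂P := by
    rw [hY_indep.integral_apply_eq_integral_integral ((measurable_contrNN_apply α x).comp hTmeas)
      hTεmeas hY (fun ω => (hTε ω).1) (fun ω _ hy => (hTε ω).abs_le_one hy)]
    exact integral_congr_ae (ae_of_all _ fun ω => hmean _ (hY ω))
  rw [integral_contrNN hTx_int, h_stat] at h_indep
  exact (contrNN_eq_self_iff hα.2.ne).1 h_indep.symm
end
end

section
/- Let S ∈ 𝒯, α ∈ [0,1), let T be a random element of 𝒯, and let T_ε be a random element of 𝒯 independent of T with E[T_ε(y)] = y for all y ∈ [0,1]. Define the contraction around S by α[T,S](x) = S(x) + α(T(x) − S(x)). If the random map T_ε ∘ α[T,S] has the same law as T (i.e., T is a stationary solution of the system T_i = T_{ε_i} ∘ α[T_{i−1},S]), then E[T(x)] = S(x) for all x ∈ [0,1]; that is, the mean map of any stationary solution of the generalised contraction system equals S. -/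
/-!
Stationarity gives `E[T(x)] = E[T_ε(c)]` with `c = α[T,S](x)`. Since `c` is independent of `T_ε`,
one may freeze `c` and integrate `T_ε` first, and `E[T_ε(y)] = y` turns this into
`E[c] = S(x) + α (E[T(x)] − S(x))`. As `α ≠ 1`, the fixed point of this affine relation is `S(x)`.

Freezing `c` needs the evaluation `(y, v) ↦ v y` to be jointly measurable, which fails for the
product σ-algebra on `ℝ × (ℝ → ℝ)`; on maps that are monotone and continuous on `[0,1]` it
agrees with `evalRatSup`, a countable supremum of measurable functions.
-/

open MeasureTheory ProbabilityTheory

noncomputable section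

/-- The α-contraction of a map `T` around a map `S`: `α[T,S](x) = S(x) + α(T(x) − S(x))`. -/
def contrAround (α : ℝ) (T S : ℝ → ℝ) (x : ℝ) : ℝ := S x + α * (T x - S x)

open Set
open scoped ENNReal

lemma InT.apply_mem_Icc {T : ℝ → ℝ} (hT : InT T) {x : ℝ} (hx : x ∈ Icc (0 : ℝ) 1) :
    T x ∈ Icc (0 : ℝ) 1 :=
  hT.2.2.1 hx

lemma InT.monotoneOn {T : ℝ → ℝ} (hT : InT T) : MonotoneOn T (Icc 0 1) :=
  hT.2.1.monotoneOn

def evalRatSup (p : ℝ × (ℝ → ℝ)) : ℝ≥0∞ :=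
  ⨆ q : ℚ, if (q : ℝ) ∈ Icc 0 p.1 then ENNReal.ofReal (p.2 q) else 0

lemma measurable_evalRatSup : Measurable evalRatSup :=
  Measurable.iSup fun _ => Measurable.ite
    ((MeasurableSet.const _).inter (measurable_fst measurableSet_Ici))
    (ENNReal.measurable_ofReal.comp ((measurable_pi_apply _).comp measurable_snd))
    measurable_const

lemma evalRatSup_eq {v : ℝ → ℝ} (hmono : MonotoneOn v (Icc 0 1))
    (hcont : ContinuousOn v (Icc 0 1)) {y : ℝ} (hy : y ∈ Icc (0 : ℝ) 1) :
    evalRatSup (y, v) = ENNReal.ofReal (v y) := by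
  refine le_antisymm (iSup_le fun q => ?_) ?_
  · split_ifs with hq
    · exact ENNReal.ofReal_le_ofReal (hmono ⟨hq.1, hq.2.trans hy.2⟩ hy hq.2)
    · exact zero_le
  · set A : Set ℝ := Icc 0 y ∩ range ((↑) : ℚ → ℝ)
    have hyA : y ∈ closure A := by
      rcases hy.1.eq_or_lt with rfl | hy0
      · exact subset_closure ⟨left_mem_Icc.2 le_rfl, 0, Rat.cast_zero⟩
      · have hIoo : Ioo 0 y ⊆ closure A :=
          (Rat.denseRange_cast.open_subset_closure_inter isOpen_Ioo).trans
            (closure_mono (inter_subset_inter_left _ Ioo_subset_Icc_self))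
        exact closure_minimal hIoo isClosed_closure
          (by rw [closure_Ioo hy0.ne]; exact right_mem_Icc.2 hy0.le)
    have hA : A ⊆ Icc 0 1 := fun t ht => ⟨ht.1.1, ht.1.2.trans hy.2⟩
    have hofReal : ContinuousWithinAt (ENNReal.ofReal ∘ v) A y :=
      (ENNReal.continuous_ofReal.continuousAt.comp_continuousWithinAt (hcont y hy)).mono hA
    refine ContinuousWithinAt.closure_le hyA hofReal continuousWithinAt_const ?_
    rintro _ ⟨ht, q, rfl⟩
    exact le_iSup_of_le q (if_pos ht).ge

section Independence

variable {Ω : Type*} [MeasurableSpace Ω] {P : Measure Ω} [IsFiniteMeasure P]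
  {Y : Ω → ℝ} {F : Ω → ℝ → ℝ}

theorem lintegral_ofReal_apply_of_indepFun (hY : Measurable Y) (hF : Measurable F)
    (hind : IndepFun Y F P) (hYI : ∀ ω, Y ω ∈ Icc (0 : ℝ) 1)
    (hmono : ∀ ω, MonotoneOn (F ω) (Icc 0 1)) (hcont : ∀ ω, ContinuousOn (F ω) (Icc 0 1)) :
    ∫⁻ ω, ENNReal.ofReal (F ω (Y ω)) ∂P = ∫⁻ ω, ∫⁻ ω', ENNReal.ofReal (F ω' (Y ω)) ∂P ∂P := by
  have hsup : ∀ ω ω', ENNReal.ofReal (F ω' (Y ω)) = evalRatSup (Y ω, F ω') := fun ω ω' =>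
    (evalRatSup_eq (hmono ω') (hcont ω') (hYI ω)).symm
  simp_rw [hsup]
  have hprod := (indepFun_iff_map_prod_eq_prod_map_map hY.aemeasurable hF.aemeasurable).1 hind
  calc ∫⁻ ω, evalRatSup (Y ω, F ω) ∂P
      = ∫⁻ p, evalRatSup p ∂(P.map Y).prod (P.map F) := by
        rw [← hprod, lintegral_map measurable_evalRatSup (hY.prodMk hF)]
    _ = ∫⁻ y, ∫⁻ v, evalRatSup (y, v) ∂P.map F ∂P.map Y :=
        lintegral_prod _ measurable_evalRatSup.aemeasurable
    _ = ∫⁻ ω, ∫⁻ ω', evalRatSup (Y ω, F ω') ∂P ∂P := by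
        rw [lintegral_map measurable_evalRatSup.lintegral_prod_right' hY]
        exact lintegral_congr fun ω =>
          lintegral_map (measurable_evalRatSup.comp measurable_prodMk_left) hF

theorem integral_apply_eq_integral_of_indepFun (hY : Measurable Y) (hF : Measurable F)
    (hind : IndepFun Y F P) (hYI : ∀ ω, Y ω ∈ Icc (0 : ℝ) 1) (hFT : ∀ ω, InT (F ω))
    (hmean : ∀ y ∈ Icc (0 : ℝ) 1, ∫ ω, F ω y ∂P = y) :
    ∫ ω, F ω (Y ω) ∂P = ∫ ω, Y ω ∂P := by
  have hFI : ∀ ω ω', F ω' (Y ω) ∈ Icc (0 : ℝ) 1 := fun ω ω' => (hFT ω').apply_mem_Icc (hYI ω)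
  have hmono : ∀ ω, MonotoneOn (F ω) (Icc 0 1) := fun ω => (hFT ω).monotoneOn
  have hcont : ∀ ω, ContinuousOn (F ω) (Icc 0 1) := fun ω => (hFT ω).1
  have hmeas : Measurable fun ω => F ω (Y ω) := by
    convert (measurable_evalRatSup.comp (hY.prodMk hF)).ennreal_toReal using 1
    ext ω
    simp [evalRatSup_eq (hmono ω) (hcont ω) (hYI ω), (hFI ω ω).1]
  have hinner : ∀ ω, ∫⁻ ω', ENNReal.ofReal (F ω' (Y ω)) ∂P = ENNReal.ofReal (Y ω) := fun ω => by
    have hFy : Measurable fun ω' => F ω' (Y ω) := (measurable_pi_apply _).comp hF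
    rw [← ofReal_integral_eq_lintegral_ofReal
      (Integrable.of_mem_Icc 0 1 hFy.aemeasurable (ae_of_all _ fun ω' => hFI ω ω'))
      (ae_of_all _ fun ω' => (hFI ω ω').1), hmean _ (hYI ω)]
  rw [integral_eq_lintegral_of_nonneg_ae (ae_of_all _ fun ω => (hFI ω ω).1)
      hmeas.aestronglyMeasurable,
    integral_eq_lintegral_of_nonneg_ae (ae_of_all _ fun ω => (hYI ω).1) hY.aestronglyMeasurable,
    lintegral_ofReal_apply_of_indepFun hY hF hind hYI hmono hcont]
  simp_rw [hinner]

end Independence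

lemma contrAround_mem_Icc {α : ℝ} (hα : α ∈ Icc (0 : ℝ) 1) {T S : ℝ → ℝ} {x : ℝ}
    (hT : T x ∈ Icc (0 : ℝ) 1) (hS : S x ∈ Icc (0 : ℝ) 1) : contrAround α T S x ∈ Icc (0 : ℝ) 1 :=
  (convex_Icc 0 1).add_smul_sub_mem hS hT hα

lemma measurable_contrAround (α : ℝ) (S : ℝ → ℝ) (x : ℝ) :
    Measurable fun T => contrAround α T S x := by
  unfold contrAround
  fun_prop

lemma integral_contrAround {Ω : Type*} [MeasurableSpace Ω] {P : Measure Ω}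
    [IsProbabilityMeasure P] (α : ℝ) {T : Ω → ℝ → ℝ} (S : ℝ → ℝ) {x : ℝ}
    (hT : Integrable (fun ω => T ω x) P) :
    ∫ ω, contrAround α (T ω) S x ∂P = contrAround α (fun y => ∫ ω, T ω y ∂P) S x := by
  unfold contrAround
  have hdev : Integrable (fun ω => α * (T ω x - S x)) P :=
    (hT.sub (integrable_const _)).const_mul α
  rw [integral_add (integrable_const _) hdev, integral_const_mul,
    integral_sub hT (integrable_const _)]
  simp

theorem stationary_mean_eq_S_general {Ω : Type*} [MeasurableSpace Ω]
    (P : Measure Ω) [IsProbabilityMeasure P]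
    (S : ℝ → ℝ) (hS : InT S) (α : ℝ) (hα : α ∈ Set.Ico (0:ℝ) 1)
    (T Tε : Ω → ℝ → ℝ) (hT : ∀ ω, InT (T ω)) (hTε : ∀ ω, InT (Tε ω))
    (hTmeas : Measurable T) (hTεmeas : Measurable Tε)
    (hindep : IndepFun T Tε P)
    (hmean : ∀ y ∈ Set.Icc (0:ℝ) 1, ∫ ω, Tε ω y ∂P = y)
    (hstat : Measure.map (fun ω => fun x => Tε ω (contrAround α (T ω) S x)) P
      = Measure.map T P) :
    ∀ x ∈ Set.Icc (0:ℝ) 1, ∫ ω, T ω x ∂P = S x := by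
  intro x hx
  have hTx : ∀ ω, T ω x ∈ Icc (0 : ℝ) 1 := fun ω => (hT ω).apply_mem_Icc hx
  have hcI : ∀ ω, contrAround α (T ω) S x ∈ Icc (0 : ℝ) 1 := fun ω =>
    contrAround_mem_Icc (Ico_subset_Icc_self hα) (hTx ω) (hS.apply_mem_Icc hx)
  -- `Measure.map` of a non-a.e.-measurable map is `0`, so `hstat` forces measurability.
  have hident : IdentDistrib (fun ω y => Tε ω (contrAround α (T ω) S y)) T P P := by
    have hlaw : IsProbabilityMeasure (P.map T) :=
      Measure.isProbabilityMeasure_map hTmeas.aemeasurable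
    exact ⟨.of_map_ne_zero (hstat ▸ hlaw.ne_zero), hTmeas.aemeasurable, hstat⟩
  have hfixed : ∫ ω, T ω x ∂P = contrAround α (fun y => ∫ ω, T ω y ∂P) S x :=
    calc ∫ ω, T ω x ∂P = ∫ ω, Tε ω (contrAround α (T ω) S x) ∂P :=
          (hident.comp (measurable_pi_apply x)).integral_eq.symm
      _ = ∫ ω, contrAround α (T ω) S x ∂P :=
          integral_apply_eq_integral_of_indepFun (measurable_contrAround α S x |>.comp hTmeas)
            hTεmeas (hindep.comp (measurable_contrAround α S x) measurable_id) hcI hTε hmean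
      _ = contrAround α (fun y => ∫ ω, T ω y ∂P) S x :=
          integral_contrAround α S <| Integrable.of_mem_Icc 0 1
            ((measurable_pi_apply x).comp hTmeas).aemeasurable (ae_of_all _ hTx)
  unfold contrAround at hfixed
  have hfactor : (1 - α) * (∫ ω, T ω x ∂P - S x) = 0 := by linear_combination hfixed
  have hα1 : 1 - α ≠ 0 := by linarith [hα.2]
  linarith [(mul_eq_zero.1 hfactor).resolve_left hα1]

/-- if `T` is a stationary solution of the generalised contraction system
`T_i = T_{ε_i} ∘ α[T_{i−1}, S]` (i.e. `T_ε ∘ α[T,S]` has the same law as `T`, with `T_ε`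
independent of `T` and of identity mean), then `E[T(x)] = S(x)` for all `x ∈ [0,1]`. -/
theorem stationary_mean_eq_S {Ω : Type*} [MeasurableSpace Ω]
    (P : Measure Ω) [IsProbabilityMeasure P]
    (S : ℝ → ℝ) (hS : InT S) (α : ℝ) (hα : α ∈ Set.Ico (0:ℝ) 1)
    (T Tε : Ω → ℝ → ℝ) (hT : ∀ ω, InT (T ω)) (hTε : ∀ ω, InT (Tε ω))
    (hTmeas : Measurable T) (hTεmeas : Measurable Tε)
    (hT'meas : Measurable fun ω => fun x => Tε ω (contrAround α (T ω) S x))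
    (hindep : IndepFun T Tε P)
    (hmean : ∀ y ∈ Set.Icc (0:ℝ) 1, ∫ ω, Tε ω y ∂P = y)
    (hstat : Measure.map (fun ω => fun x => Tε ω (contrAround α (T ω) S x)) P
      = Measure.map T P) :
    ∀ x ∈ Set.Icc (0:ℝ) 1, ∫ ω, T ω x ∂P = S x :=
  stationary_mean_eq_S_general P S hS α hα T Tε hT hTε hTmeas hTεmeas hindep hmean hstat
end
end
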